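/- arXiv:1212.1279 — 7 statements merged into one kernel-verified Lean document; each statement's English description precedes it below -/
import Mathlib

section
/- Let G be a finite group, g ∈ G of order N, and k a field of characteristic 0. Then g is a polynomial (with coefficients in k) in the element g - g⁻¹ of the group algebra kG if and only if N is odd. -/
-- odd case core lemma
lemma odd_case {k : Type*} [Field k] [CharZero k] {B : Type*} [CommRing B] [Algebra k B]
    [FiniteDimensional k B] (a b : B) (hab : a * b = 1) {N : ℕ} (hN : Odd N)
    (haN : a ^ N = 1) : a ∈ Algebra.adjoin k {a - b} := by
  set x := a - b with hx
  set S := Algebra.adjoin k {x} with hS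
  have hxS : x ∈ S := Algebra.subset_adjoin rfl
  set u : ℕ → B := fun n => a ^ n + b ^ n with hu
  set v : ℕ → B := fun n => a ^ n - b ^ n with hv
  have hurec : ∀ n, u (n + 2) = u n + x * v (n + 1) := by
    intro n; simp only [hu, hv, hx]; linear_combination (a ^ n + b ^ n) * hab
  have hvrec : ∀ n, v (n + 2) = v n + x * u (n + 1) := by
    intro n; simp only [hu, hv, hx]; linear_combination (a ^ n - b ^ n) * hab
  have main : ∀ n, (u (2*n) ∈ S ∧ v (2*n+1) ∈ S) ∧
      (∃ c ∈ S, u (2*n+1) = c * u 1) ∧ (∃ d ∈ S, v (2*n) = d * u 1) := by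
    intro n
    induction n with
    | zero =>
      refine ⟨⟨?_, ?_⟩, ⟨1, one_mem S, (one_mul _).symm⟩, ⟨0, zero_mem S, by simp [hv]⟩⟩
      · have h0 : u 0 = 1 + 1 := by simp [hu]
        rw [h0]; exact add_mem (one_mem S) (one_mem S)
      · have h1 : v 1 = x := by simp [hv, hx]
        rw [h1]; exact hxS
    | succ n ih =>
      obtain ⟨⟨hu2, hv2⟩, ⟨c, hc, hcu⟩, ⟨d, hd, hdv⟩⟩ := ih
      have keyu : u (2*(n+1)) ∈ S := by
        have e : 2*(n+1) = 2*n + 2 := by ring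
        rw [e, hurec]; exact add_mem hu2 (mul_mem hxS hv2)
      have keyv : v (2*(n+1)+1) ∈ S := by
        have e : 2*(n+1)+1 = (2*n+1) + 2 := by ring
        rw [e, hvrec]
        have e2 : 2*n+1+1 = 2*(n+1) := by ring
        rw [e2]; exact add_mem hv2 (mul_mem hxS keyu)
      have keyd : ∃ d' ∈ S, v (2*(n+1)) = d' * u 1 := by
        refine ⟨d + x * c, add_mem hd (mul_mem hxS hc), ?_⟩
        have e : 2*(n+1) = 2*n + 2 := by ring
        rw [e, hvrec, hcu, hdv]; ring
      have keyc : ∃ c' ∈ S, u (2*(n+1)+1) = c' * u 1 := by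
        obtain ⟨d', hd', hdv'⟩ := keyd
        refine ⟨c + x * d', add_mem hc (mul_mem hxS hd'), ?_⟩
        have e : 2*(n+1)+1 = (2*n+1) + 2 := by ring
        rw [e, hurec]
        have e2 : 2*n+1+1 = 2*(n+1) := by ring
        rw [e2, hdv', hcu]; ring
      exact ⟨⟨keyu, keyv⟩, keyc, keyd⟩
  obtain ⟨m, hm⟩ := hN
  obtain ⟨-, ⟨c, hc, hcu⟩, -⟩ := main m
  have hbN : b ^ N = 1 := by
    have h1 : (a * b) ^ N = 1 := by rw [hab, one_pow]
    rwa [mul_pow, haN, one_mul] at h1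
  have huN : u (2*m+1) = 1 + 1 := by
    simp only [hu]; rw [← hm, haN, hbN]
  have hcu2 : c * u 1 = 1 + 1 := hcu.symm.trans huN
  haveI : FiniteDimensional k S := FiniteDimensional.finiteDimensional_submodule S.toSubmodule
  set cS : S := ⟨c, hc⟩ with hcS
  have hinj : Function.Injective (LinearMap.mulLeft k cS) := by
    intro y z hyz
    have h1 : c * (y : B) = c * (z : B) := congrArg Subtype.val hyz
    have h2 : u 1 * (c * (y:B)) = u 1 * (c * (z:B)) := by rw [h1]
    rw [← mul_assoc, ← mul_assoc, mul_comm (u 1) c, hcu2] at h2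
    have h3 : ((2:k) • (y:B)) = (2:k) • (z:B) := by
      rw [two_smul, two_smul]; linear_combination h2
    exact Subtype.ext (smul_right_injective B (two_ne_zero) h3)
  obtain ⟨z, hz⟩ := (LinearMap.injective_iff_surjective (f := LinearMap.mulLeft k cS)).mp hinj 1
  have hz' : c * (z : B) = 1 := congrArg Subtype.val hz
  have hu1 : u 1 = (1+1) * (z:B) := by
    calc u 1 = (c * u 1) * z := by rw [mul_comm c (u 1), mul_assoc, hz', mul_one]
    _ = (1+1) * (z:B) := by rw [hcu2]
  have hu1S : u 1 ∈ S := by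
    rw [hu1]; exact mul_mem (add_mem (one_mem S) (one_mem S)) z.2
  have hv1 : v 1 = x := by simp [hv, hx]
  have hax : a = (2:k)⁻¹ • (u 1 + v 1) := by
    have h4 : u 1 + v 1 = (2:k) • a := by
      simp only [hu, hv, pow_one]; rw [two_smul]; ring
    rw [h4, smul_smul, inv_mul_cancel₀ (two_ne_zero), one_smul]
  rw [hax]
  exact S.smul_mem (add_mem hu1S (hv1 ▸ hxS)) _

lemma even_case {k : Type*} [Field k] [CharZero k] {N : ℕ} (hN2 : 2 ≤ N) (hNe : Even N) :
    MonoidAlgebra.of k (Multiplicative (ZMod N)) (Multiplicative.ofAdd 1) ∉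
      Algebra.adjoin k {MonoidAlgebra.of k (Multiplicative (ZMod N)) (Multiplicative.ofAdd 1) -
        MonoidAlgebra.of k (Multiplicative (ZMod N)) (Multiplicative.ofAdd 1)⁻¹} := by
  haveI : NeZero N := ⟨by omega⟩
  haveI : Fact (1 < N) := ⟨by omega⟩
  intro hmem
  set s : Multiplicative (ZMod N) := Multiplicative.ofAdd 1 with hs
  have hkey : ∀ m : ℕ, (-1 : k) ^ (m % N) = (-1) ^ m := by
    intro m
    conv_rhs => rw [← Nat.mod_add_div m N]
    rw [pow_add, pow_mul, hNe.neg_one_pow, one_pow, mul_one]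
  set χ : Multiplicative (ZMod N) →* k :=
    { toFun := fun j => (-1 : k) ^ (Multiplicative.toAdd j).val
      map_one' := by simp
      map_mul' := fun j1 j2 => by
        simp only [toAdd_mul]
        rw [ZMod.val_add, hkey, pow_add] } with hχ
  set ψ₁ : MonoidAlgebra k (Multiplicative (ZMod N)) →ₐ[k] k := MonoidAlgebra.lift k k _ 1 with hψ₁
  set ψ₂ : MonoidAlgebra k (Multiplicative (ZMod N)) →ₐ[k] k := MonoidAlgebra.lift k k _ χ
    with hψ₂
  have hχs : χ s = -1 := by
    show (-1:k) ^ (Multiplicative.toAdd s).val = -1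
    rw [hs, toAdd_ofAdd, ZMod.val_one, pow_one]
  have hχsi : χ s⁻¹ = -1 := by
    show (-1:k) ^ (Multiplicative.toAdd s⁻¹).val = -1
    have h1 : Multiplicative.toAdd s⁻¹ = (-1 : ZMod N) := by
      rw [hs]; simp
    rw [h1]
    obtain ⟨N', rfl⟩ : ∃ N', N = N' + 1 := ⟨N-1, by omega⟩
    rw [ZMod.val_neg_one]
    refine Odd.neg_one_pow ?_
    rcases hNe with ⟨t, ht⟩
    exact Nat.odd_iff.mpr (by omega)
  have heq : Set.EqOn ψ₁ ψ₂
      {MonoidAlgebra.of k (Multiplicative (ZMod N)) s - MonoidAlgebra.of k _ s⁻¹} := by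
    intro y hy; rw [Set.mem_singleton_iff] at hy; subst hy
    rw [map_sub, map_sub, hψ₁, hψ₂, MonoidAlgebra.lift_of, MonoidAlgebra.lift_of,
      MonoidAlgebra.lift_of, MonoidAlgebra.lift_of, hχs, hχsi]
    simp
  have hcontra := (AlgHom.eqOn_adjoin_iff.mpr heq) hmem
  rw [hψ₁, hψ₂, MonoidAlgebra.lift_of, MonoidAlgebra.lift_of, hχs] at hcontra
  norm_num at hcontra

/-- In the group algebra `kG` (char 0), an element `g` of order `N` is a polynomial in
`g - g⁻¹` if and only if `N` is odd. -/
theorem stmt2 {k : Type*} [Field k] [CharZero k] {G : Type*} [Group G] [Finite G]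
    (g : G) (N : ℕ) (hN : orderOf g = N) :
    MonoidAlgebra.of k G g ∈
      Algebra.adjoin k {MonoidAlgebra.of k G g - MonoidAlgebra.of k G g⁻¹} ↔ Odd N := by
  have hNpos : 0 < N := hN ▸ orderOf_pos g
  rcases eq_or_ne N 1 with rfl | h1
  · exact iff_of_true (by rw [orderOf_eq_one_iff.mp hN, map_one]; exact one_mem _) odd_one
  have h2 : 2 ≤ N := by omega
  haveI : NeZero N := ⟨by omega⟩
  haveI : Fact (1 < N) := ⟨by omega⟩
  have hpow : ∀ m : ℕ, g ^ (m % N) = g ^ m := fun m => hN ▸ pow_mod_orderOf g m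
  set s : Multiplicative (ZMod N) := Multiplicative.ofAdd 1 with hs
  set φ : Multiplicative (ZMod N) →* G :=
    { toFun := fun j => g ^ (Multiplicative.toAdd j).val
      map_one' := by simp
      map_mul' := fun j1 j2 => by
        simp only [toAdd_mul]
        rw [ZMod.val_add, ← pow_add]
        exact hpow _ } with hφ
  have hφinj : Function.Injective φ := by
    intro j1 j2 h
    have hval := pow_injOn_Iio_orderOf (x := g)
      (by rw [hN]; exact ZMod.val_lt _) (by rw [hN]; exact ZMod.val_lt _) h
    exact Multiplicative.toAdd.injective (ZMod.val_injective N hval)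
  set ι : MonoidAlgebra k (Multiplicative (ZMod N)) →ₐ[k] MonoidAlgebra k G :=
    MonoidAlgebra.mapDomainAlgHom k k φ with hι
  have hιinj : Function.Injective ι := fun p q h =>
    MonoidAlgebra.mapDomain_injective hφinj h
  have hι_of : ∀ m, ι (MonoidAlgebra.of k _ m) = MonoidAlgebra.of k G (φ m) := by
    intro m
    simp [hι, MonoidAlgebra.of_apply, Finsupp.mapDomain_single]
  have hφs : φ s = g := by
    show g ^ (Multiplicative.toAdd (Multiplicative.ofAdd (1 : ZMod N))).val = g
    rw [toAdd_ofAdd, ZMod.val_one, pow_one]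
  have hφsi : φ s⁻¹ = g⁻¹ := by rw [map_inv, hφs]
  have himg : ι (MonoidAlgebra.of k _ s - MonoidAlgebra.of k _ s⁻¹) =
      MonoidAlgebra.of k G g - MonoidAlgebra.of k G g⁻¹ := by
    rw [map_sub, hι_of, hι_of, hφs, hφsi]
  have hadj : (Algebra.adjoin k {MonoidAlgebra.of k (Multiplicative (ZMod N)) s -
      MonoidAlgebra.of k _ s⁻¹}).map ι =
      Algebra.adjoin k {MonoidAlgebra.of k G g - MonoidAlgebra.of k G g⁻¹} := by
    rw [AlgHom.map_adjoin_singleton, himg]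
  have htrans : (MonoidAlgebra.of k G g ∈
      Algebra.adjoin k {MonoidAlgebra.of k G g - MonoidAlgebra.of k G g⁻¹}) ↔
      (MonoidAlgebra.of k (Multiplicative (ZMod N)) s ∈
      Algebra.adjoin k {MonoidAlgebra.of k (Multiplicative (ZMod N)) s -
        MonoidAlgebra.of k _ s⁻¹}) := by
    rw [← hadj]
    constructor
    · intro h
      rw [Subalgebra.mem_map] at h
      obtain ⟨y, hy, hyeq⟩ := h
      have : y = MonoidAlgebra.of k _ s := hιinj (by rw [hyeq, hι_of, hφs])
      rw [this] at hy; exact hy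
    · intro h
      rw [Subalgebra.mem_map]
      exact ⟨_, h, by rw [hι_of, hφs]⟩
  rw [htrans]
  constructor
  · intro h
    by_contra hodd
    exact even_case h2 (Nat.not_odd_iff_even.mp hodd) h
  · intro hodd
    haveI : FiniteDimensional k (MonoidAlgebra k (Multiplicative (ZMod N))) :=
      Module.Finite.equiv ((Finsupp.linearEquivFunOnFinite k k _).symm.trans (MonoidAlgebra.coeffLinearEquiv k).symm)
    have hab : MonoidAlgebra.of k (Multiplicative (ZMod N)) s *
        MonoidAlgebra.of k _ s⁻¹ = 1 := by
      rw [← map_mul, mul_inv_cancel, map_one]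
    have hsN : s ^ N = 1 := by
      have : s ^ N = Multiplicative.ofAdd ((N : ℕ) • (1 : ZMod N)) := by
        rw [hs, ← ofAdd_nsmul]
      rw [this]
      simp [ZMod.natCast_self]
    have haN : (MonoidAlgebra.of k (Multiplicative (ZMod N)) s) ^ N = 1 := by
      rw [← map_pow, hsN, map_one]
    exact odd_case _ _ hab hodd haN
end

section
/- Let g be an element of order N in a finite group G, with N odd, and k a field of characteristic 0. Then there exists a polynomial P ∈ ℚ[X] such that g = P(g - g⁻¹) in the group algebra kG. -/
open Polynomial

/-- Chebyshev-like pair: `(cS m).1 ↦ x^(2m)+y^(2m)`, `(cS m).2 ↦ x^(2m+1)-y^(2m+1)`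
when evaluated at `x - y` for inverse elements `x`, `y`. -/
noncomputable def cS : ℕ → Polynomial ℚ × Polynomial ℚ
  | 0 => (2, X)
  | (m+1) => (X * (cS m).2 + (cS m).1, X * (X * (cS m).2 + (cS m).1) + (cS m).2)

lemma cS_aeval {A : Type*} [Ring A] [Algebra ℚ A] (x y : A)
    (h1 : x * y = 1) (h2 : y * x = 1) (m : ℕ) :
    aeval (x - y) (cS m).1 = x ^ (2*m) + y ^ (2*m) ∧
    aeval (x - y) (cS m).2 = x ^ (2*m+1) - y ^ (2*m+1) := by
  have hx : ∀ k, x * y ^ (k+1) = y ^ k := fun k => by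
    rw [pow_succ', ← mul_assoc, h1, one_mul]
  have hy : ∀ k, y * x ^ (k+1) = x ^ k := fun k => by
    rw [pow_succ', ← mul_assoc, h2, one_mul]
  induction m with
  | zero => constructor <;> simp [cS, map_ofNat, one_add_one_eq_two]
  | succ m ih =>
    obtain ⟨hc, hs⟩ := ih
    have hc' : aeval (x - y) (cS (m+1)).1 = x ^ (2*(m+1)) + y ^ (2*(m+1)) := by
      show aeval (x - y) (X * (cS m).2 + (cS m).1) = _
      rw [map_add, map_mul, aeval_X, hc, hs]
      have e1 : 2 * (m+1) = (2*m+1) + 1 := by ring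
      rw [e1, sub_mul, mul_sub, mul_sub, hx, hy, ← pow_succ', ← pow_succ']
      abel
    refine ⟨hc', ?_⟩
    show aeval (x - y) (X * (X * (cS m).2 + (cS m).1) + (cS m).2) = _
    rw [map_add, map_mul, aeval_X]
    rw [show aeval (x - y) (X * (cS m).2 + (cS m).1) = x ^ (2*(m+1)) + y ^ (2*(m+1)) from hc',
      hs]
    have e2 : 2 * (m+1) + 1 = (2*m+2) + 1 := by ring
    have e3 : 2 * (m+1) = 2*m + 1 + 1 := by ring
    rw [e2, e3, sub_mul, mul_add, mul_add, hx, hy, ← pow_succ', ← pow_succ']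
    abel

/-- If `g` has odd order in a finite group `G` and `k` has characteristic 0, then there is a
polynomial `P` with rational coefficients such that `g = P(g - g⁻¹)` in the group algebra `kG`. -/
theorem stmt3 {k : Type*} [Field k] [CharZero k] {G : Type*} [Group G] [Finite G]
    (g : G) (N : ℕ) (hN : orderOf g = N) (hodd : Odd N) :
    ∃ P : Polynomial ℚ,
      Polynomial.aeval (MonoidAlgebra.of k G g - MonoidAlgebra.of k G g⁻¹) P =
        MonoidAlgebra.of k G g := by
  obtain ⟨r, hr⟩ := hodd
  set x : MonoidAlgebra k G := MonoidAlgebra.of k G g with hxdef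
  set y : MonoidAlgebra k G := MonoidAlgebra.of k G g⁻¹ with hydef
  have h1 : x * y = 1 := by
    rw [hxdef, hydef, ← map_mul, mul_inv_cancel]; rfl
  have h2 : y * x = 1 := by
    rw [hxdef, hydef, ← map_mul, inv_mul_cancel]; rfl
  have hxN : x ^ N = 1 := by
    rw [hxdef, ← map_pow, ← hN, pow_orderOf_eq_one]; rfl
  have hyN : y ^ N = 1 := by
    rw [hydef, ← map_pow, inv_pow, ← hN, pow_orderOf_eq_one, inv_one]; rfl
  refine ⟨C (1/2 : ℚ) * (X + (cS (r+1)).1), ?_⟩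
  have key := (cS_aeval x y h1 h2 (r+1)).1
  have hexp : 2 * (r + 1) = N + 1 := by omega
  rw [hexp, pow_succ, pow_succ, hxN, hyN, one_mul, one_mul] at key
  rw [map_mul, aeval_C, map_add, aeval_X, key]
  have : (x - y) + (x + y) = x + x := by abel
  rw [this, Algebra.smul_def (1/2 : ℚ) (x + x) |>.symm, smul_add, ← smul_add,
    ← two_smul ℚ x, smul_smul]
  norm_num
end

section
/- Let G be a finite group, g ∈ G of order N, and k a field of characteristic 0. Then g + g⁻¹ is an even polynomial (i.e. a polynomial in X²) in g - g⁻¹ inside kG if and only if N is odd; moreover in that case the polynomial can be chosen with rational coefficients. -/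
open Polynomial MonoidAlgebra

private lemma dickson_aeval_pair {R A : Type*} [CommRing R] [Ring A] [Algebra R A]
    (x y : A) (h1 : x * y = 1) (h2 : y * x = 1) (n : ℕ) :
    Polynomial.aeval (x + y) (Polynomial.dickson 1 (1 : R) n) = x ^ n + y ^ n := by
  have key : ∀ n : ℕ, (Polynomial.aeval (x + y) (Polynomial.dickson 1 (1 : R) n) = x ^ n + y ^ n)
      ∧ (Polynomial.aeval (x + y) (Polynomial.dickson 1 (1 : R) (n + 1))
          = x ^ (n + 1) + y ^ (n + 1)) := by
    intro n
    induction n with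
    | zero =>
      constructor
      · rw [Polynomial.dickson_zero]
        simp only [map_sub, map_ofNat, map_one]
        norm_num
      · rw [Polynomial.dickson_one]
        simp
    | succ n ih =>
      refine ⟨ih.2, ?_⟩
      rw [Polynomial.dickson_add_two]
      rw [map_sub, map_mul, Polynomial.aeval_X, map_mul, Polynomial.aeval_C, map_one, one_mul,
        ih.1, ih.2]
      have e1 : x * y ^ (n + 1) = y ^ n := by
        rw [pow_succ', ← mul_assoc, h1, one_mul]
      have e2 : y * x ^ (n + 1) = x ^ n := by
        rw [pow_succ', ← mul_assoc, h2, one_mul]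
      have expand : (x + y) * (x ^ (n + 1) + y ^ (n + 1))
          = x * x ^ (n + 1) + x * y ^ (n + 1) + (y * x ^ (n + 1) + y * y ^ (n + 1)) := by
        rw [add_mul, mul_add, mul_add]
      rw [expand, e1, e2, ← pow_succ', ← pow_succ']
      abel
  exact (key n).1

private lemma construct_poly {k G R : Type*} [Field k] [Group G] [CommRing R]
    [Algebra R (MonoidAlgebra k G)] (g : G) (N : ℕ) (hN : orderOf g = N) (hodd : Odd N) :
    ∃ Q : Polynomial R,
      Polynomial.aeval ((MonoidAlgebra.of k G g - MonoidAlgebra.of k G g⁻¹) ^ 2) Q =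
        MonoidAlgebra.of k G g + MonoidAlgebra.of k G g⁻¹ := by
  obtain ⟨t, ht⟩ := hodd
  set u := MonoidAlgebra.of k G g with hu
  set v := MonoidAlgebra.of k G g⁻¹ with hv
  have h1 : u * v = 1 := by rw [hu, hv, ← map_mul, mul_inv_cancel, map_one]
  have h2 : v * u = 1 := by rw [hu, hv, ← map_mul, inv_mul_cancel, map_one]
  have h12 : u ^ 2 * v ^ 2 = 1 := by
    have e : u ^ 2 * v ^ 2 = u * ((u * v) * v) := by noncomm_ring
    rw [e, h1, one_mul, h1]
  have h21 : v ^ 2 * u ^ 2 = 1 := by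
    have e : v ^ 2 * u ^ 2 = v * ((v * u) * u) := by noncomm_ring
    rw [e, h2, one_mul, h2]
  have hx : (u - v) ^ 2 = u ^ 2 + v ^ 2 - 2 := by
    have expand : (u - v) ^ 2 = u * u - u * v - v * u + v * v := by noncomm_ring
    rw [expand, h1, h2, ← sq, ← sq, sub_sub, one_add_one_eq_two]
    abel
  refine ⟨(Polynomial.dickson 1 (1 : R) (t + 1)).comp (Polynomial.X + Polynomial.C 2), ?_⟩
  rw [Polynomial.aeval_comp]
  have step : Polynomial.aeval ((u - v) ^ 2) (Polynomial.X + Polynomial.C (2 : R))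
      = u ^ 2 + v ^ 2 := by
    rw [map_add, Polynomial.aeval_X, Polynomial.aeval_C, hx, map_ofNat]
    noncomm_ring
  rw [step, dickson_aeval_pair (u ^ 2) (v ^ 2) h12 h21]
  rw [← pow_mul, ← pow_mul]
  have hg : g ^ (2 * (t + 1)) = g := by
    have e : 2 * (t + 1) = N + 1 := by omega
    rw [e, pow_succ, ← hN, pow_orderOf_eq_one, one_mul]
  have hg' : (g⁻¹) ^ (2 * (t + 1)) = g⁻¹ := by rw [inv_pow, hg]
  rw [hu, hv, ← map_pow, ← map_pow, hg, hg']

/-- In the group algebra `kG` (char 0), for `g` of order `N`, the element `g + g⁻¹` is an even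
polynomial (a polynomial in `(g - g⁻¹)²`) in `g - g⁻¹` iff `N` is odd; in that case the
polynomial may be chosen with rational coefficients. -/
theorem stmt4 {k : Type*} [Field k] [CharZero k] {G : Type*} [Group G] [Finite G]
    (g : G) (N : ℕ) (hN : orderOf g = N) :
    ((∃ Q : Polynomial k,
        Polynomial.aeval ((MonoidAlgebra.of k G g - MonoidAlgebra.of k G g⁻¹) ^ 2) Q =
          MonoidAlgebra.of k G g + MonoidAlgebra.of k G g⁻¹) ↔ Odd N) ∧
    (Odd N → ∃ Q : Polynomial ℚ,
        Polynomial.aeval ((MonoidAlgebra.of k G g - MonoidAlgebra.of k G g⁻¹) ^ 2) Q =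
          MonoidAlgebra.of k G g + MonoidAlgebra.of k G g⁻¹) := by
  classical
  set u := MonoidAlgebra.of k G g with hu
  set v := MonoidAlgebra.of k G g⁻¹ with hv
  have hard : ∀ Q : Polynomial k,
      Polynomial.aeval ((u - v) ^ 2) Q = u + v → Odd N := by
    intro Q heq
    by_contra hodd
    have heven : Even N := Nat.not_odd_iff_even.mp hodd
    -- the subalgebra of elements supported in zpowers (g^2)
    set H : Subgroup G := Subgroup.zpowers (g ^ 2) with hH
    set S : Subalgebra k (MonoidAlgebra k G) :=
      { carrier := {a : MonoidAlgebra k G | ∀ x ∈ a.coeff.support, x ∈ H}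
        mul_mem' := by
          intro a b ha hb x hx
          have hmem := MonoidAlgebra.support_coeff_mul_subset a b hx
          rw [Finset.mem_mul] at hmem
          obtain ⟨y, hy, z, hz, rfl⟩ := hmem
          exact H.mul_mem (ha y hy) (hb z hz)
        one_mem' := by
          intro x hx
          rw [MonoidAlgebra.one_def, MonoidAlgebra.coeff_single] at hx
          have := Finsupp.support_single_subset hx
          rw [Finset.mem_singleton] at this
          rw [this]
          exact H.one_mem
        add_mem' := by
          intro a b ha hb x hx
          rw [MonoidAlgebra.coeff_add] at hx
          rcases Finset.mem_union.mp (Finsupp.support_add hx) with h | h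
          · exact ha x h
          · exact hb x h
        zero_mem' := by
          intro x hx
          simp at hx
        algebraMap_mem' := by
          intro r x hx
          have hmap : (algebraMap k (MonoidAlgebra k G)) r = MonoidAlgebra.single 1 r := by
            simp [MonoidAlgebra.coe_algebraMap]
          rw [hmap, MonoidAlgebra.coeff_single] at hx
          have := Finsupp.support_single_subset hx
          rw [Finset.mem_singleton] at this
          rw [this]
          exact H.one_mem } with hS
    have h1 : u * v = 1 := by rw [hu, hv, ← map_mul, mul_inv_cancel, map_one]
    have h2 : v * u = 1 := by rw [hu, hv, ← map_mul, inv_mul_cancel, map_one]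
    have hx : (u - v) ^ 2 = u ^ 2 + v ^ 2 - 2 := by
      have expand : (u - v) ^ 2 = u * u - u * v - v * u + v * v := by noncomm_ring
      rw [expand, h1, h2, ← sq, ← sq, sub_sub, one_add_one_eq_two]
      abel
    have hu2 : u ^ 2 ∈ S := by
      intro x hxs
      rw [hu, ← map_pow, MonoidAlgebra.of_apply, MonoidAlgebra.coeff_single] at hxs
      have := Finsupp.support_single_subset hxs
      rw [Finset.mem_singleton] at this
      rw [this]
      exact Subgroup.mem_zpowers _
    have hv2 : v ^ 2 ∈ S := by
      intro x hxs
      rw [hv, ← map_pow, MonoidAlgebra.of_apply, MonoidAlgebra.coeff_single] at hxs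
      have := Finsupp.support_single_subset hxs
      rw [Finset.mem_singleton] at this
      rw [this, inv_pow]
      exact H.inv_mem (Subgroup.mem_zpowers _)
    have h2S : (2 : MonoidAlgebra k G) ∈ S := by
      have : (2 : MonoidAlgebra k G) = algebraMap k (MonoidAlgebra k G) 2 := by
        rw [map_ofNat]
      rw [this]
      exact S.algebraMap_mem 2
    have hxS : (u - v) ^ 2 ∈ S := by
      rw [hx]
      exact S.sub_mem (S.add_mem hu2 hv2) h2S
    have hmem : Polynomial.aeval ((u - v) ^ 2) Q ∈ S :=
      Algebra.adjoin_le (Set.singleton_subset_iff.mpr hxS)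
        (Polynomial.aeval_mem_adjoin_singleton k _)
    rw [heq] at hmem
    have hgsup : g ∈ (u + v).coeff.support := by
      rw [Finsupp.mem_support_iff]
      rw [hu, hv, MonoidAlgebra.of_apply, MonoidAlgebra.of_apply]
      rw [MonoidAlgebra.coeff_add, Finsupp.add_apply, MonoidAlgebra.coeff_single, MonoidAlgebra.coeff_single, Finsupp.single_eq_same, Finsupp.single_apply]
      split_ifs <;> norm_num
    have hgH : g ∈ H := hmem g hgsup
    obtain ⟨j, hj⟩ := Subgroup.mem_zpowers_iff.mp hgH
    have h2j : g ^ (2 * j) = g := by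
      have e : (g ^ 2) ^ j = g ^ (2 * j) := by
        rw [← zpow_natCast g 2, ← zpow_mul]
        norm_num
      rw [← e, hj]
    have hone : g ^ (2 * j - 1) = 1 := by
      rw [zpow_sub, zpow_one, h2j, mul_inv_cancel]
    have hdvd : (N : ℤ) ∣ 2 * j - 1 := by
      rw [← hN]
      exact orderOf_dvd_iff_zpow_eq_one.mpr hone
    have h2N : (2 : ℤ) ∣ (N : ℤ) := Int.natCast_dvd_natCast.mpr heven.two_dvd
    have h2d : (2 : ℤ) ∣ 2 * j - 1 := dvd_trans h2N hdvd
    omega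
  refine ⟨⟨fun ⟨Q, hQ⟩ => hard Q hQ, fun hodd => construct_poly g N hN hodd⟩,
    fun hodd => construct_poly g N hN hodd⟩
end

section
/- Let ζ = exp(2πi/N) with N odd. Then the values ζ^k - ζ^{-k} for 0 ≤ k < N are pairwise distinct, and consequently the family (x - x⁻¹)^r for 0 ≤ r < N is a basis of the algebra ℂ[x]/(x^N - 1). -/
open Polynomial

/-- The algebra `ℂ[x]/(x^N - 1)`. -/
abbrev cycQuot (N : ℕ) : Type :=
  Polynomial ℂ ⧸ Ideal.span ({Polynomial.X ^ N - 1} : Set (Polynomial ℂ))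

/-- The class `x` of `X` in `ℂ[x]/(x^N - 1)`; note `x⁻¹ = x^(N-1)`. -/
noncomputable def xclass (N : ℕ) : cycQuot N :=
  Ideal.Quotient.mk _ Polynomial.X

lemma inj_aux {N : ℕ} (hN : Odd N) {ζ : ℂ} (hζ : IsPrimitiveRoot ζ N) :
    Function.Injective fun m : Fin N => ζ ^ (m : ℕ) - ζ⁻¹ ^ (m : ℕ) := by
  have hN0 : N ≠ 0 := by rintro rfl; simp at hN
  have hz : ζ ≠ 0 := hζ.ne_zero hN0
  intro a b hab
  simp only at hab
  have ha : (ζ ^ (a : ℕ)) ≠ 0 := pow_ne_zero _ hz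
  have hb : (ζ ^ (b : ℕ)) ≠ 0 := pow_ne_zero _ hz
  have key : (ζ ^ (a : ℕ) - ζ ^ (b : ℕ)) * (ζ ^ (a : ℕ) * ζ ^ (b : ℕ) + 1) = 0 := by
    have h : ζ ^ (a : ℕ) - (ζ ^ (a : ℕ))⁻¹ = ζ ^ (b : ℕ) - (ζ ^ (b : ℕ))⁻¹ := by
      simpa [inv_pow] using hab
    field_simp at h
    linear_combination h
  rcases mul_eq_zero.mp key with h | h
  · exact Fin.ext (hζ.pow_inj a.isLt b.isLt (sub_eq_zero.mp h))
  · exfalso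
    have hmul : ζ ^ ((a : ℕ) + (b : ℕ)) = -1 := by
      rw [pow_add]; linear_combination h
    have h2 : ζ ^ (2 * ((a : ℕ) + (b : ℕ))) = 1 := by
      rw [mul_comm, pow_mul, hmul]; norm_num
    have hdvd : N ∣ 2 * ((a : ℕ) + (b : ℕ)) := hζ.dvd_of_pow_eq_one _ h2
    have hdvd' : N ∣ (a : ℕ) + (b : ℕ) :=
      (Nat.Coprime.dvd_of_dvd_mul_left (by simpa using hN) hdvd)
    have h1 : ζ ^ ((a : ℕ) + (b : ℕ)) = 1 := (hζ.pow_eq_one_iff_dvd _).mpr hdvd'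
    rw [h1] at hmul
    norm_num at hmul

lemma basis_aux (N : ℕ) (hN : Odd N) :
    ∃ b : Module.Basis (Fin N) ℂ (AdjoinRoot (X ^ N - 1 : ℂ[X])),
      ∀ r : Fin N, b r = (AdjoinRoot.root (X ^ N - 1 : ℂ[X])
        - AdjoinRoot.root (X ^ N - 1 : ℂ[X]) ^ (N - 1)) ^ (r : ℕ) := by
  have hN0 : N ≠ 0 := by rintro rfl; simp at hN
  have hNpos : 0 < N := Nat.pos_of_ne_zero hN0
  set ζ : ℂ := Complex.exp (2 * Real.pi * Complex.I / N) with hζdef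
  have hζ : IsPrimitiveRoot ζ N := Complex.isPrimitiveRoot_exp N hN0
  have hinj := inj_aux hN hζ
  have hfne : (X ^ N - 1 : ℂ[X]) ≠ 0 := by
    intro h
    have := congrArg (fun p => Polynomial.coeff p N) h
    simp [Polynomial.coeff_X_pow, Polynomial.coeff_one, hN0] at this
  haveI : Nonempty (Fin N) := ⟨⟨0, hNpos⟩⟩
  set y : AdjoinRoot (X ^ N - 1 : ℂ[X]) :=
    AdjoinRoot.root (X ^ N - 1 : ℂ[X]) - AdjoinRoot.root (X ^ N - 1 : ℂ[X]) ^ (N - 1) with hy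
  have hroot : ∀ k : Fin N, (Polynomial.aeval (ζ ^ (k : ℕ)) (X ^ N - 1 : ℂ[X])) = 0 := by
    intro k
    have hone : (ζ ^ (k : ℕ)) ^ N = 1 := by
      rw [← pow_mul, mul_comm, pow_mul, hζ.pow_eq_one, one_pow]
    simp [hone]
  have hev : ∀ k : Fin N,
      (AdjoinRoot.liftAlgHom (X ^ N - 1 : ℂ[X]) (Algebra.ofId ℂ ℂ) (ζ ^ (k : ℕ)) ((by rfl : _ = Polynomial.aeval (ζ ^ (k : ℕ)) (X ^ N - 1 : ℂ[X])).trans (hroot k))) y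
        = ζ ^ (k : ℕ) - ζ⁻¹ ^ (k : ℕ) := by
    intro k
    have h1 : (ζ ^ (k : ℕ)) ^ (N - 1) = ζ⁻¹ ^ (k : ℕ) := by
      have hm : (ζ ^ (k : ℕ)) ^ (N - 1) * ζ ^ (k : ℕ) = 1 := by
        rw [← pow_succ, Nat.sub_add_cancel hNpos, ← pow_mul,
          mul_comm, pow_mul, hζ.pow_eq_one, one_pow]
      rw [inv_pow]
      exact eq_inv_of_mul_eq_one_left hm
    rw [hy, map_sub, map_pow, AdjoinRoot.liftAlgHom_root, h1]
  have hli : LinearIndependent ℂ (fun r : Fin N => y ^ (r : ℕ)) := by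
    rw [Fintype.linearIndependent_iff]
    intro g hg j
    set p : ℂ[X] := ∑ i : Fin N, Polynomial.C (g i) * X ^ (i : ℕ) with hp
    have haev : Polynomial.aeval y p = 0 := by
      rw [hp, map_sum, ← hg]
      refine Finset.sum_congr rfl fun i _ => ?_
      rw [map_mul, Polynomial.aeval_C, map_pow, Polynomial.aeval_X, ← Algebra.smul_def]
    have hevalk : ∀ k : Fin N, Polynomial.eval (ζ ^ (k : ℕ) - ζ⁻¹ ^ (k : ℕ)) p = 0 := by
      intro k
      have h := Polynomial.aeval_algHom_apply
        (AdjoinRoot.liftAlgHom (X ^ N - 1 : ℂ[X]) (Algebra.ofId ℂ ℂ) (ζ ^ (k : ℕ)) ((by rfl : _ = Polynomial.aeval (ζ ^ (k : ℕ)) (X ^ N - 1 : ℂ[X])).trans (hroot k))) y p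
      rw [haev, map_zero, hev k] at h
      simpa using h
    have hdeg : p.natDegree < N := by
      have hle : p.natDegree ≤ N - 1 := by
        apply Polynomial.natDegree_sum_le_of_forall_le
        intro i _
        calc (Polynomial.C (g i) * X ^ (i : ℕ)).natDegree
            ≤ (Polynomial.C (g i)).natDegree + (X ^ (i : ℕ) : ℂ[X]).natDegree :=
              Polynomial.natDegree_mul_le
          _ ≤ N - 1 := by
              simp only [Polynomial.natDegree_C, Polynomial.natDegree_X_pow, zero_add]
              omega
      omega
    have hp0 : p = 0 := by
      apply Polynomial.eq_zero_of_natDegree_lt_card_of_eval_eq_zero p hinj hevalk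
      simpa using hdeg
    have hc := congrArg (fun q => Polynomial.coeff q (j : ℕ)) hp0
    simp only [hp, Polynomial.finset_sum_coeff, Polynomial.coeff_C_mul,
      Polynomial.coeff_X_pow, Polynomial.coeff_zero, mul_ite, mul_one, mul_zero,
      Fin.val_eq_val, Finset.sum_ite_eq, Finset.sum_ite_eq', Finset.mem_univ, if_true] at hc
    exact hc
  have hfr : Module.finrank ℂ (AdjoinRoot (X ^ N - 1 : ℂ[X])) = N := by
    have h : Module.finrank ℂ (AdjoinRoot (X ^ N - 1 : ℂ[X]))
        = (X ^ N - 1 : ℂ[X]).natDegree := (AdjoinRoot.powerBasis hfne).finrank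
    have hdim : (X ^ N - 1 : ℂ[X]).natDegree = N := by
      have h1 : (X ^ N - 1 : ℂ[X]) = X ^ N - Polynomial.C 1 := by rw [map_one]
      rw [h1, Polynomial.natDegree_X_pow_sub_C]
    rw [hdim] at h
    exact h
  refine ⟨basisOfLinearIndependentOfCardEqFinrank hli (by simpa using hfr.symm), ?_⟩
  intro r
  rw [coe_basisOfLinearIndependentOfCardEqFinrank]

/-- For `ζ = exp(2πi/N)` with `N` odd, the values `ζ^k - ζ^{-k}` for `0 ≤ k < N` are pairwise
distinct, and the family `(x - x⁻¹)^r`, `0 ≤ r < N`, is a basis of `ℂ[x]/(x^N - 1)`. -/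
theorem stmt5 (N : ℕ) (hN : Odd N) :
    (Function.Injective fun m : Fin N =>
      Complex.exp (2 * Real.pi * Complex.I / N) ^ (m : ℕ) -
        (Complex.exp (2 * Real.pi * Complex.I / N))⁻¹ ^ (m : ℕ)) ∧
    ∃ b : Module.Basis (Fin N) ℂ (cycQuot N),
      ∀ r : Fin N, b r = (xclass N - xclass N ^ (N - 1)) ^ (r : ℕ) := by
  have hN0 : N ≠ 0 := by rintro rfl; simp at hN
  refine ⟨inj_aux hN (Complex.isPrimitiveRoot_exp N hN0), ?_⟩
  obtain ⟨b, hb⟩ := basis_aux N hN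
  exact ⟨b, hb⟩
end

section
/- Let G be a finite group and g ∈ G of order 3. Then the conjugation operator Ad(g): x ↦ gxg⁻¹ on the group algebra kG (char k = 0) is a polynomial in the operator D: x ↦ gx - xg - (g⁻¹x - xg⁻¹); explicitly, Ad(g) = (1/24)D⁴ + (1/12)D³ + (5/8)D² + (3/4)D + 1. -/
/-- For `g` of order 3, the conjugation operator `Ad(g) : x ↦ g x g⁻¹` on the group algebra
`kG` is the explicit polynomial `(1/24)D⁴ + (1/12)D³ + (5/8)D² + (3/4)D + 1` in the operator
`D : x ↦ gx - xg - (g⁻¹x - xg⁻¹)`. -/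
theorem stmt6 {k : Type*} [Field k] [CharZero k] {G : Type*} [Group G] [Finite G]
    (g : G) (hg : orderOf g = 3)
    (Adg D : Module.End k (MonoidAlgebra k G))
    (hAd : ∀ x, Adg x = MonoidAlgebra.of k G g * x * MonoidAlgebra.of k G g⁻¹)
    (hD : ∀ x, D x = MonoidAlgebra.of k G g * x - x * MonoidAlgebra.of k G g -
      (MonoidAlgebra.of k G g⁻¹ * x - x * MonoidAlgebra.of k G g⁻¹)) :
    Adg = (1 / 24 : k) • D ^ 4 + (1 / 12 : k) • D ^ 3 + (5 / 8 : k) • D ^ 2 +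
      (3 / 4 : k) • D + 1 := by
  have hg3 : g ^ 3 = 1 := by rw [← hg]; exact pow_orderOf_eq_one g
  have hgg : g * g = g⁻¹ := by
    have h : g * g * g = 1 := by
      simpa [pow_succ, mul_assoc] using hg3
    exact eq_inv_of_mul_eq_one_left h
  set c := MonoidAlgebra.of k G g with hc
  set d := MonoidAlgebra.of k G g⁻¹ with hd'
  have h1 : c * c = d := by rw [hc, hd', ← map_mul, hgg]
  have h2 : d * d = c := by
    rw [hc, hd', ← map_mul, ← mul_inv_rev, hgg, inv_inv]
  have h3 : c * d = 1 := by rw [hc, hd', ← map_mul, mul_inv_cancel, map_one]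
  have h4 : d * c = 1 := by rw [hc, hd', ← map_mul, inv_mul_cancel, map_one]
  have h1' : ∀ y : MonoidAlgebra k G, c * (c * y) = d * y := by
    intro y; rw [← mul_assoc, h1]
  have h2' : ∀ y : MonoidAlgebra k G, d * (d * y) = c * y := by
    intro y; rw [← mul_assoc, h2]
  have h3' : ∀ y : MonoidAlgebra k G, c * (d * y) = y := by
    intro y; rw [← mul_assoc, h3, one_mul]
  have h4' : ∀ y : MonoidAlgebra k G, d * (c * y) = y := by
    intro y; rw [← mul_assoc, h4, one_mul]
  refine LinearMap.ext fun x => ?_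
  simp only [LinearMap.add_apply, LinearMap.smul_apply,
    pow_succ, pow_zero, Module.End.mul_apply, Module.End.one_apply]
  rw [hAd]
  simp only [hD]
  simp only [mul_sub, sub_mul, mul_assoc, smul_sub, smul_add, h1, h2, h3, h4, h1', h2', h3', h4',
    one_mul, mul_one]
  module
end

section
/- Let G be a finite group with a surjective homomorphism ε: G → {±1}, and let ρ be a complex irreducible representation of G such that ρ is not self-dual (ρ* ≄ ρ) and such that ρ(g⁻¹) = -ρ(g) for every g with ε(g) = -1. Then dim ρ = 1. -/
open Module

/-- Common eigenvector for a commuting family of endomorphisms. -/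
lemma stmt7_aux {V : Type*} [AddCommGroup V] [Module ℂ V] [FiniteDimensional ℂ V]
    (S : Set (Module.End ℂ V)) (hcomm : ∀ f ∈ S, ∀ g ∈ S, f * g = g * f) :
    ∀ (n : ℕ) (W : Submodule ℂ V), Module.finrank ℂ W ≤ n → W ≠ ⊥ →
      (∀ f ∈ S, ∀ v ∈ W, f v ∈ W) →
      ∃ v, v ∈ W ∧ v ≠ 0 ∧ ∀ f ∈ S, ∃ c : ℂ, f v = c • v := by
  intro n
  induction n with
  | zero =>
    intro W hW hWne _
    exact absurd (Submodule.finrank_eq_zero.mp (Nat.le_zero.mp hW)) hWne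
  | succ n ih =>
    intro W hWn hWne hWinv
    by_cases hscal : ∀ f ∈ S, ∃ c : ℂ, ∀ v ∈ W, f v = c • v
    · obtain ⟨v, hvW, hv0⟩ := Submodule.exists_mem_ne_zero_of_ne_bot hWne
      exact ⟨v, hvW, hv0, fun f hf => by
        obtain ⟨c, hc⟩ := hscal f hf; exact ⟨c, hc v hvW⟩⟩
    · push_neg at hscal
      obtain ⟨f, hfS, hf⟩ := hscal
      haveI : Nontrivial W := Submodule.nontrivial_iff_ne_bot.mpr hWne
      have hmapsto : ∀ v ∈ W, f v ∈ W := hWinv f hfS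
      set f' : Module.End ℂ W := f.restrict hmapsto with hf'
      obtain ⟨μ, hμ⟩ := Module.End.exists_eigenvalue f'
      obtain ⟨w, hw⟩ := hμ.exists_hasEigenvector
      set W₁ : Submodule ℂ V := W ⊓ Module.End.eigenspace f μ with hW₁
      have hwW₁ : (w : V) ∈ W₁ := by
        refine Submodule.mem_inf.mpr ⟨w.2, ?_⟩
        rw [Module.End.mem_eigenspace_iff]
        have h1 := hw.apply_eq_smul
        calc f (w : V) = ((f' w : W) : V) := (LinearMap.restrict_coe_apply _ _ _).symm
          _ = μ • (w : V) := by rw [h1]; rfl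
      have hW₁ne : W₁ ≠ ⊥ := by
        intro h
        apply hw.2
        rw [h] at hwW₁
        exact Subtype.ext (by simpa using hwW₁)
      have hlt : W₁ < W := by
        refine lt_of_le_of_ne inf_le_left ?_
        intro h
        obtain ⟨v, hvW, hv⟩ := hf μ
        apply hv
        have hvW₁ : v ∈ W₁ := h ▸ hvW
        exact Module.End.mem_eigenspace_iff.mp (Submodule.mem_inf.mp hvW₁).2
      have hW₁inv : ∀ g ∈ S, ∀ v ∈ W₁, g v ∈ W₁ := by
        intro g hgS v hv
        obtain ⟨hvW, hveig⟩ := Submodule.mem_inf.mp hv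
        refine Submodule.mem_inf.mpr ⟨hWinv g hgS v hvW, ?_⟩
        rw [Module.End.mem_eigenspace_iff] at hveig ⊢
        calc f (g v) = (f * g) v := rfl
          _ = (g * f) v := by rw [hcomm f hfS g hgS]
          _ = g (f v) := rfl
          _ = μ • g v := by rw [hveig, map_smul]
      have hrank : Module.finrank ℂ W₁ ≤ n := by
        have h1 := Submodule.finrank_lt_finrank_of_lt hlt
        omega
      obtain ⟨v, hv1, hv2, hv3⟩ := ih W₁ hrank hW₁ne hW₁inv
      exact ⟨v, (Submodule.mem_inf.mp hv1).1, hv2, hv3⟩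

/-- If a finite group `G` has a surjection `ε : G → {±1}` and an irreducible complex
representation `ρ` which is not self-dual and satisfies `ρ(g⁻¹) = -ρ(g)` whenever
`ε(g) = -1`, then `dim ρ = 1`. -/
theorem stmt7 {G : Type*} [Group G] [Finite G] {V : Type*} [AddCommGroup V] [Module ℂ V]
    [FiniteDimensional ℂ V] [Nontrivial V]
    (ε : G →* ℤˣ) (hε : Function.Surjective ε)
    (ρ : Representation ℂ G V)
    (hirr : ∀ U : Submodule ℂ V, (∀ (g : G), ∀ v ∈ U, ρ g v ∈ U) → U = ⊥ ∨ U = ⊤)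
    (hnsd : ¬ ∃ e : V ≃ₗ[ℂ] Module.Dual ℂ V, ∀ (g : G) (v : V), e (ρ g v) = ρ.dual g (e v))
    (hmin : ∀ g : G, ε g = -1 → ρ g⁻¹ = - ρ g) :
    Module.finrank ℂ V = 1 := by
  classical
  obtain ⟨g₀, hg₀⟩ := hε (-1)
  have hρmul : ∀ g h : G, ∀ v : V, ρ (g * h) v = ρ g (ρ h v) := fun g h v => by
    rw [map_mul]; rfl
  have hρρ : ∀ (g : G) (v : V), ρ g (ρ g⁻¹ v) = v := fun g v => by
    rw [← hρmul, mul_inv_cancel, map_one]; rfl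
  have hρρ' : ∀ (g : G) (v : V), ρ g⁻¹ (ρ g v) = v := fun g v => by
    rw [← hρmul, inv_mul_cancel, map_one]; rfl
  have hA : ∀ v : V, ρ g₀⁻¹ v = -(ρ g₀ v) := fun v => by
    rw [hmin g₀ hg₀]; rfl
  have hAA : ∀ v : V, ρ g₀ (ρ g₀ v) = -v := fun v => by
    have h1 := hρρ' g₀ v
    rw [hA] at h1
    exact neg_eq_iff_eq_neg.mp h1
  have hinve : ∀ g : G, ε g = 1 → ε g⁻¹ = 1 := fun g hg => by
    rw [map_inv, hg]; rfl
  have hkey : ∀ n : G, ε n = 1 → ∀ v : V, ρ n⁻¹ (ρ g₀ v) = ρ g₀ (ρ n v) := by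
    intro n hn v
    have hεn : ε (g₀ * n) = -1 := by rw [map_mul, hg₀, hn, mul_one]
    have h1 := congrFun (congrArg (fun T : V →ₗ[ℂ] V => (T : V → V)) (hmin _ hεn)) v
    simp only [LinearMap.neg_apply] at h1
    rw [mul_inv_rev, hρmul, hA, map_neg, hρmul] at h1
    exact neg_injective h1
  have hkey' : ∀ n : G, ε n = 1 → ∀ v : V, ρ n (ρ g₀ v) = ρ g₀ (ρ n⁻¹ v) := by
    intro n hn v
    have := hkey n⁻¹ (hinve n hn) v
    rwa [inv_inv] at this
  have hcommN : ∀ k n : G, ε k = 1 → ε n = 1 → ∀ v : V, ρ k (ρ n v) = ρ n (ρ k v) := by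
    intro k n hk hn v
    have h1 : ρ g₀ (ρ n (ρ k v)) = ρ g₀ (ρ k (ρ n v)) := by
      calc ρ g₀ (ρ n (ρ k v)) = ρ n⁻¹ (ρ g₀ (ρ k v)) := (hkey n hn _).symm
        _ = ρ n⁻¹ (ρ k⁻¹ (ρ g₀ v)) := by rw [hkey k hk]
        _ = ρ (k * n)⁻¹ (ρ g₀ v) := by rw [mul_inv_rev, hρmul]
        _ = ρ g₀ (ρ (k * n) v) := hkey (k * n) (by rw [map_mul, hk, hn, mul_one]) v
        _ = ρ g₀ (ρ k (ρ n v)) := by rw [hρmul]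
    have h2 := congrArg (ρ g₀⁻¹) h1
    rw [hρρ' g₀, hρρ' g₀] at h2
    exact h2.symm
  -- common eigenvector
  set S : Set (Module.End ℂ V) := {T | ∃ g : G, ε g = 1 ∧ T = ρ g} with hS
  have hScomm : ∀ f ∈ S, ∀ g ∈ S, f * g = g * f := by
    rintro f ⟨k, hk, rfl⟩ g ⟨n, hn, rfl⟩
    ext v
    exact hcommN k n hk hn v
  have htopne : (⊤ : Submodule ℂ V) ≠ ⊥ := by
    obtain ⟨x, hx⟩ := exists_ne (0 : V)
    intro h
    exact hx (by simpa using Submodule.eq_bot_iff _ |>.mp h x Submodule.mem_top)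
  obtain ⟨v₀, -, hv₀0, hv₀⟩ := stmt7_aux S hScomm (Module.finrank ℂ (⊤ : Submodule ℂ V)) ⊤
    le_rfl htopne (fun f _ v _ => Submodule.mem_top)
  have hv : ∀ g : G, ε g = 1 → ∃ c : ℂ, ρ g v₀ = c • v₀ := fun g hg =>
    hv₀ (ρ g) ⟨g, hg, rfl⟩
  choose lam hlam using hv
  set lamf : G → ℂ := fun g => if h : ε g = 1 then lam g h else 1 with hlamfdef
  have hlamf : ∀ (g : G), ε g = 1 → ρ g v₀ = lamf g • v₀ := by
    intro g h
    rw [hlamfdef]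
    simp only [dif_pos h]
    exact hlam g h
  set Vl : Submodule ℂ V := ⨅ (g : G) (_ : ε g = 1), Module.End.eigenspace (ρ g) (lamf g)
    with hVldef
  set Vl' : Submodule ℂ V := ⨅ (g : G) (_ : ε g = 1), Module.End.eigenspace (ρ g) (lamf g⁻¹)
    with hVl'def
  have hmemVl : ∀ v : V, v ∈ Vl ↔ ∀ g, ε g = 1 → ρ g v = lamf g • v := by
    intro v
    rw [hVldef]
    simp [Submodule.mem_iInf, Module.End.mem_eigenspace_iff]
  have hmemVl' : ∀ v : V, v ∈ Vl' ↔ ∀ g, ε g = 1 → ρ g v = lamf g⁻¹ • v := by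
    intro v
    rw [hVl'def]
    simp [Submodule.mem_iInf, Module.End.mem_eigenspace_iff]
  have hv₀Vl : v₀ ∈ Vl := (hmemVl v₀).mpr hlamf
  have hunit : ∀ g : G, ε g = 1 → lamf g * lamf g⁻¹ = 1 := by
    intro g hg
    have h1 : ρ g (ρ g⁻¹ v₀) = v₀ := hρρ g v₀
    rw [hlamf g⁻¹ (hinve g hg), map_smul, hlamf g hg, smul_smul, mul_comm] at h1
    have h2 : (lamf g * lamf g⁻¹) • v₀ = (1 : ℂ) • v₀ := by rw [one_smul]; exact h1
    exact smul_left_injective ℂ hv₀0 h2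
  have hmapVl : ∀ g, ε g = 1 → ∀ v ∈ Vl, ρ g v ∈ Vl := by
    intro g hg v hvm
    rw [hmemVl] at hvm ⊢
    intro n hn
    calc ρ n (ρ g v) = ρ g (ρ n v) := hcommN n g hn hg v
      _ = ρ g (lamf n • v) := by rw [hvm n hn]
      _ = lamf n • ρ g v := map_smul _ _ _
  have hmapVl' : ∀ g, ε g = 1 → ∀ v ∈ Vl', ρ g v ∈ Vl' := by
    intro g hg v hvm
    rw [hmemVl'] at hvm ⊢
    intro n hn
    calc ρ n (ρ g v) = ρ g (ρ n v) := hcommN n g hn hg v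
      _ = ρ g (lamf n⁻¹ • v) := by rw [hvm n hn]
      _ = lamf n⁻¹ • ρ g v := map_smul _ _ _
  have hAmapVl : ∀ v ∈ Vl, ρ g₀ v ∈ Vl' := by
    intro v hvm
    rw [hmemVl] at hvm
    rw [hmemVl']
    intro n hn
    calc ρ n (ρ g₀ v) = ρ g₀ (ρ n⁻¹ v) := hkey' n hn v
      _ = ρ g₀ (lamf n⁻¹ • v) := by rw [hvm n⁻¹ (hinve n hn)]
      _ = lamf n⁻¹ • ρ g₀ v := map_smul _ _ _
  have hAmapVl' : ∀ v ∈ Vl', ρ g₀ v ∈ Vl := by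
    intro v hvm
    rw [hmemVl'] at hvm
    rw [hmemVl]
    intro n hn
    calc ρ n (ρ g₀ v) = ρ g₀ (ρ n⁻¹ v) := hkey' n hn v
      _ = ρ g₀ (lamf n⁻¹⁻¹ • v) := by rw [hvm n⁻¹ (hinve n hn)]
      _ = lamf n • ρ g₀ v := by rw [inv_inv, map_smul]
  have hcases : ∀ g : G, ε g = 1 ∨ ε g = -1 := fun g => Int.units_eq_one_or (ε g)
  have hneg1inv : (-1 : ℤˣ)⁻¹ = -1 := rfl
  have hdec : ∀ g : G, ε g = -1 → ε (g * g₀⁻¹) = 1 := by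
    intro g hg
    rw [map_mul, map_inv, hg₀, hg, hneg1inv]
    rfl
  have hxdec : ∀ g : G, ε g = -1 → ∀ v : V, ρ g v = ρ (g * g₀⁻¹) (ρ g₀ v) := by
    intro g hg v
    rw [← hρmul, inv_mul_cancel_right]
  -- the sup is everything
  have hWinv1 : ∀ g, ε g = 1 → ∀ v ∈ Vl ⊔ Vl', ρ g v ∈ Vl ⊔ Vl' := by
    intro g hg v hv
    obtain ⟨a, ha, b, hb, rfl⟩ := Submodule.mem_sup.mp hv
    rw [map_add]
    exact Submodule.add_mem _ (Submodule.mem_sup_left (hmapVl g hg a ha))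
      (Submodule.mem_sup_right (hmapVl' g hg b hb))
  have hWinvA : ∀ v ∈ Vl ⊔ Vl', ρ g₀ v ∈ Vl ⊔ Vl' := by
    intro v hv
    obtain ⟨a, ha, b, hb, rfl⟩ := Submodule.mem_sup.mp hv
    rw [map_add]
    exact Submodule.add_mem _ (Submodule.mem_sup_right (hAmapVl a ha))
      (Submodule.mem_sup_left (hAmapVl' b hb))
  have hWinv : ∀ g : G, ∀ v ∈ Vl ⊔ Vl', ρ g v ∈ Vl ⊔ Vl' := by
    intro g v hv
    rcases hcases g with hg | hg
    · exact hWinv1 g hg v hv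
    · rw [hxdec g hg v]
      exact hWinv1 _ (hdec g hg) _ (hWinvA v hv)
  have hWtop : Vl ⊔ Vl' = ⊤ := by
    refine (hirr _ hWinv).resolve_left ?_
    intro h
    apply hv₀0
    have hm : v₀ ∈ Vl ⊔ Vl' := Submodule.mem_sup_left hv₀Vl
    rw [h] at hm
    simpa using hm
  by_cases hc : ∀ g : G, ε g = 1 → lamf g = lamf g⁻¹
  · -- scalar case : dimension one
    have hVl'le : Vl' ≤ Vl := by
      intro v hv
      rw [hmemVl'] at hv
      rw [hmemVl]
      intro g hg
      rw [hc g hg]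
      exact hv g hg
    have hVltop : Vl = ⊤ := by
      rw [← hWtop]
      exact (sup_eq_left.mpr hVl'le).symm
    have hscal : ∀ g : G, ε g = 1 → ∀ v : V, ρ g v = lamf g • v := fun g hg v =>
      (hmemVl v).mp (hVltop ▸ Submodule.mem_top) g hg
    obtain ⟨μ, hμ⟩ := Module.End.exists_eigenvalue (ρ g₀ : Module.End ℂ V)
    obtain ⟨v₁, hv₁⟩ := hμ.exists_hasEigenvector
    have hLinv : ∀ g : G, ∀ v ∈ (ℂ ∙ v₁), ρ g v ∈ (ℂ ∙ v₁) := by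
      intro g v hv
      obtain ⟨c, rfl⟩ := Submodule.mem_span_singleton.mp hv
      rw [map_smul]
      refine Submodule.smul_mem _ c ?_
      rcases hcases g with hg | hg
      · rw [hscal g hg]
        exact Submodule.smul_mem _ _ (Submodule.mem_span_singleton_self v₁)
      · rw [hxdec g hg, hv₁.apply_eq_smul, map_smul, hscal _ (hdec g hg)]
        exact Submodule.smul_mem _ _
          (Submodule.smul_mem _ _ (Submodule.mem_span_singleton_self v₁))
    have hLtop : (ℂ ∙ v₁) = ⊤ := by
      refine (hirr _ hLinv).resolve_left ?_
      rw [Submodule.span_singleton_eq_bot]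
      exact hv₁.2
    rw [← finrank_top ℂ V, ← hLtop]
    exact finrank_span_singleton hv₁.2
  · -- non-self-dual contradiction
    exfalso
    push_neg at hc
    obtain ⟨g₁, hg₁, hne⟩ := hc
    have hdisj : Vl ⊓ Vl' = ⊥ := by
      rw [eq_bot_iff]
      intro v hv
      obtain ⟨h1, h2⟩ := Submodule.mem_inf.mp hv
      rw [hmemVl] at h1
      rw [hmemVl'] at h2
      have h3 : (lamf g₁ - lamf g₁⁻¹) • v = 0 := by
        rw [sub_smul, ← h1 g₁ hg₁, ← h2 g₁ hg₁, sub_self]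
      rcases smul_eq_zero.mp h3 with h | h
      · exact absurd (sub_eq_zero.mp h) hne
      · simpa using h
    have hIC : IsCompl Vl Vl' := ⟨disjoint_iff.mpr hdisj, codisjoint_iff.mpr hWtop⟩
    set P := Vl.projectionOnto Vl' hIC with hPdef
    set Q := Vl'.projectionOnto Vl hIC.symm with hQdef
    have hPab : ∀ a ∈ Vl, ∀ b ∈ Vl', ((P (a + b) : Vl) : V) = a := by
      intro a ha b hb
      rw [map_add, Submodule.linearProjOfIsCompl_apply_right' hIC hb, add_zero]
      exact congrArg Subtype.val (Submodule.linearProjOfIsCompl_apply_left hIC ⟨a, ha⟩)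
    have hQab : ∀ a ∈ Vl, ∀ b ∈ Vl', ((Q (a + b) : Vl') : V) = b := by
      intro a ha b hb
      rw [map_add, Submodule.linearProjOfIsCompl_apply_right' hIC.symm ha, zero_add]
      exact congrArg Subtype.val (Submodule.linearProjOfIsCompl_apply_left hIC.symm ⟨b, hb⟩)
    have hAv₀ : ρ g₀ v₀ ≠ 0 := by
      intro h
      apply hv₀0
      have h1 := hAA v₀
      rw [h, map_zero] at h1
      exact neg_eq_zero.mp h1.symm
    obtain ⟨f, hf⟩ : ∃ f : Module.Dual ℂ V, f v₀ ≠ 0 := by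
      by_contra h
      push_neg at h
      exact hv₀0 ((Module.forall_dual_apply_eq_zero_iff ℂ v₀).mp h)
    obtain ⟨f', hf'⟩ : ∃ f' : Module.Dual ℂ V, f' (ρ g₀ v₀) ≠ 0 := by
      by_contra h
      push_neg at h
      exact hAv₀ ((Module.forall_dual_apply_eq_zero_iff ℂ _).mp h)
    set E : V →ₗ[ℂ] Module.Dual ℂ V := LinearMap.mk₂ ℂ
      (fun v w => f ((P v : V)) * f' ((Q w : V)) + f (ρ g₀ ((Q v : V))) * f' (ρ g₀ ((P w : V))))
      (by intro m₁ m₂ n; simp only [map_add, Submodule.coe_add]; ring)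
      (by intro c m n; simp only [map_smul, Submodule.coe_smul, smul_eq_mul]; ring)
      (by intro m n₁ n₂; simp only [map_add, Submodule.coe_add]; ring)
      (by intro c m n; simp only [map_smul, Submodule.coe_smul, smul_eq_mul]; ring)
      with hEdef
    have hE4 : ∀ a ∈ Vl, ∀ b ∈ Vl', ∀ a' ∈ Vl, ∀ b' ∈ Vl',
        E (a + b) (a' + b') = f a * f' b' + f (ρ g₀ b) * f' (ρ g₀ a') := by
      intro a ha b hb a' ha' b' hb'
      rw [hEdef]
      simp only [LinearMap.mk₂_apply]
      rw [hPab a ha b hb, hQab a ha b hb, hPab a' ha' b' hb', hQab a' ha' b' hb']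
    have hdecomp : ∀ v : V, ∃ a ∈ Vl, ∃ b ∈ Vl', v = a + b := by
      intro v
      have hv : v ∈ Vl ⊔ Vl' := hWtop ▸ Submodule.mem_top
      obtain ⟨a, ha, b, hb, h⟩ := Submodule.mem_sup.mp hv
      exact ⟨a, ha, b, hb, h.symm⟩
    have hinvN : ∀ g : G, ε g = 1 → ∀ v w : V, E (ρ g v) (ρ g w) = E v w := by
      intro g hg v w
      obtain ⟨a, ha, b, hb, rfl⟩ := hdecomp v
      obtain ⟨a', ha', b', hb', rfl⟩ := hdecomp w
      have e1 : ρ g (a + b) = lamf g • a + lamf g⁻¹ • b := by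
        rw [map_add, (hmemVl a).mp ha g hg, (hmemVl' b).mp hb g hg]
      have e2 : ρ g (a' + b') = lamf g • a' + lamf g⁻¹ • b' := by
        rw [map_add, (hmemVl a').mp ha' g hg, (hmemVl' b').mp hb' g hg]
      rw [e1, e2, hE4 _ (Submodule.smul_mem _ _ ha) _ (Submodule.smul_mem _ _ hb)
        _ (Submodule.smul_mem _ _ ha') _ (Submodule.smul_mem _ _ hb'),
        hE4 a ha b hb a' ha' b' hb']
      simp only [map_smul, smul_eq_mul]
      have hu := hunit g hg
      linear_combination (f a * f' b' + f (ρ g₀ b) * f' (ρ g₀ a')) * hu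
    have hinvA : ∀ v w : V, E (ρ g₀ v) (ρ g₀ w) = E v w := by
      intro v w
      obtain ⟨a, ha, b, hb, rfl⟩ := hdecomp v
      obtain ⟨a', ha', b', hb', rfl⟩ := hdecomp w
      have e1 : ρ g₀ (a + b) = ρ g₀ b + ρ g₀ a := by rw [map_add, add_comm]
      have e2 : ρ g₀ (a' + b') = ρ g₀ b' + ρ g₀ a' := by rw [map_add, add_comm]
      rw [e1, e2, hE4 _ (hAmapVl' b hb) _ (hAmapVl a ha) _ (hAmapVl' b' hb') _ (hAmapVl a' ha'),
        hE4 a ha b hb a' ha' b' hb', hAA a, hAA b', map_neg, map_neg]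
      ring
    have hinvAll : ∀ g : G, ∀ v w : V, E (ρ g v) (ρ g w) = E v w := by
      intro g v w
      rcases hcases g with hg | hg
      · exact hinvN g hg v w
      · rw [hxdec g hg v, hxdec g hg w, hinvN _ (hdec g hg), hinvA]
    have hinv' : ∀ g : G, ∀ v w : V, E (ρ g v) w = E v (ρ g⁻¹ w) := by
      intro g v w
      conv_lhs => rw [← hρρ g w]
      exact hinvAll g v (ρ g⁻¹ w)
    have hEv₀ : E v₀ (ρ g₀ v₀) ≠ 0 := by
      have h0 : E v₀ (ρ g₀ v₀) = f v₀ * f' (ρ g₀ v₀) := by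
        have h1 := hE4 v₀ hv₀Vl 0 (Submodule.zero_mem _) 0 (Submodule.zero_mem _)
          (ρ g₀ v₀) (hAmapVl v₀ hv₀Vl)
        simpa using h1
      rw [h0]
      exact mul_ne_zero hf hf'
    have hker : LinearMap.ker E = ⊥ := by
      have hkerinv : ∀ g : G, ∀ v ∈ LinearMap.ker E, ρ g v ∈ LinearMap.ker E := by
        intro g v hv
        rw [LinearMap.mem_ker] at hv ⊢
        ext w
        rw [LinearMap.zero_apply, hinv' g v w, hv]
        rfl
      refine (hirr _ hkerinv).resolve_right ?_
      intro h
      apply hEv₀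
      have : v₀ ∈ LinearMap.ker E := h ▸ Submodule.mem_top
      rw [LinearMap.mem_ker] at this
      rw [this]
      rfl
    have hinj : Function.Injective E := LinearMap.ker_eq_bot.mp hker
    have hdim : Module.finrank ℂ V = Module.finrank ℂ (Module.Dual ℂ V) :=
      Subspace.dual_finrank_eq.symm
    refine hnsd ⟨E.linearEquivOfInjective hinj hdim, fun g v => ?_⟩
    ext w
    show (E.linearEquivOfInjective hinj hdim) (ρ g v) w = (ρ.dual g) ((E.linearEquivOfInjective hinj hdim) v) w
    rw [LinearMap.linearEquivOfInjective_apply, Representation.dual_apply,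
      Module.Dual.transpose_apply, LinearMap.comp_apply, LinearMap.linearEquivOfInjective_apply]
    exact hinv' g v w
end

section
/- Let W be an irreducible complex reflection group all of whose reflections have order 2, with sign homomorphism ε: W → {±1} (induced by the determinant) and rotation subgroup O = Ker ε. Then O is generated by the products su for s, u reflections in W with su ≠ us. -/
open Matrix

/-- A reflection of order 2: an involution fixing a hyperplane pointwise, encoded as an
involution `s` with `rank (s - 1) = 1`. -/
def IsReflectionGL {n : ℕ} {R : Type*} [CommRing R] (s : GL (Fin n) R) : Prop :=
  s * s = 1 ∧ ((s : Matrix (Fin n) (Fin n) R) - 1).rank = 1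

namespace Stmt10Aux

variable {n : ℕ}

/-- The `-1` eigenline of a reflection, as the range of `s - 1`. -/
noncomputable def Ls (s : GL (Fin n) ℂ) : Submodule ℂ (Fin n → ℂ) :=
  LinearMap.range ((s : Matrix (Fin n) (Fin n) ℂ) - 1).mulVecLin

lemma mem_Ls {s : GL (Fin n) ℂ} {v : Fin n → ℂ} :
    v ∈ Ls s ↔ ∃ y, ((s : Matrix (Fin n) (Fin n) ℂ) - 1) *ᵥ y = v := by
  simp [Ls, LinearMap.mem_range, Matrix.mulVecLin_apply, Matrix.sub_mulVec, Matrix.one_mulVec]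

lemma sq_mat {s : GL (Fin n) ℂ} (hs : s * s = 1) :
    (s : Matrix (Fin n) (Fin n) ℂ) * (s : Matrix (Fin n) (Fin n) ℂ) = 1 := by
  rw [← Units.val_mul, hs, Units.val_one]

lemma inv_eq_self {s : GL (Fin n) ℂ} (hs : s * s = 1) : s⁻¹ = s :=
  inv_eq_of_mul_eq_one_right hs

lemma finrank_Ls {s : GL (Fin n) ℂ} (hs : IsReflectionGL s) :
    Module.finrank ℂ (Ls s) = 1 := hs.2

lemma Ls_ne_bot {s : GL (Fin n) ℂ} (hs : IsReflectionGL s) : Ls s ≠ ⊥ := by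
  intro h
  have := finrank_Ls hs
  rw [h, finrank_bot] at this
  exact zero_ne_one this

lemma exists_gen {s : GL (Fin n) ℂ} (hs : IsReflectionGL s) :
    ∃ x : Fin n → ℂ, x ≠ 0 ∧ Ls s = Submodule.span ℂ {x} := by
  have h1 : Module.finrank ℂ (Ls s) = 1 := finrank_Ls hs
  rw [finrank_eq_one_iff'] at h1
  obtain ⟨v, hv0, hv⟩ := h1
  refine ⟨(v : Fin n → ℂ), by simpa using hv0, le_antisymm ?_ ?_⟩
  · intro w hw
    obtain ⟨c, hc⟩ := hv ⟨w, hw⟩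
    have : c • (v : Fin n → ℂ) = w := congrArg Subtype.val hc
    rw [← this]
    exact Submodule.smul_mem _ _ (Submodule.mem_span_singleton_self _)
  · rw [Submodule.span_le, Set.singleton_subset_iff]
    exact v.2

lemma acts_neg {s : GL (Fin n) ℂ} (hs : s * s = 1) {v : Fin n → ℂ} (hv : v ∈ Ls s) :
    (s : Matrix (Fin n) (Fin n) ℂ) *ᵥ v = -v := by
  obtain ⟨y, hy⟩ := mem_Ls.mp hv
  have key : (s : Matrix (Fin n) (Fin n) ℂ) * ((s : Matrix (Fin n) (Fin n) ℂ) - 1)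
      = -((s : Matrix (Fin n) (Fin n) ℂ) - 1) := by
    rw [Matrix.mul_sub, sq_mat hs, Matrix.mul_one, neg_sub]
  rw [← hy, Matrix.mulVec_mulVec, key, Matrix.neg_mulVec]

lemma commute_mem_Ls {s u : GL (Fin n) ℂ}
    (hc : (u : Matrix (Fin n) (Fin n) ℂ) * s = (s : Matrix (Fin n) (Fin n) ℂ) * u)
    {v : Fin n → ℂ} (hv : v ∈ Ls s) :
    (u : Matrix (Fin n) (Fin n) ℂ) *ᵥ v ∈ Ls s := by
  obtain ⟨y, hy⟩ := mem_Ls.mp hv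
  refine mem_Ls.mpr ⟨(u : Matrix (Fin n) (Fin n) ℂ) *ᵥ y, ?_⟩
  rw [Matrix.mulVec_mulVec, ← hy, Matrix.mulVec_mulVec,
    show ((u : Matrix (Fin n) (Fin n) ℂ)) * ((s : Matrix (Fin n) (Fin n) ℂ) - 1)
      = ((s : Matrix (Fin n) (Fin n) ℂ) - 1) * u by
        rw [Matrix.sub_mul, Matrix.mul_sub, Matrix.one_mul, Matrix.mul_one, hc]]

/-- A zero matrix test via `mulVec`. -/
lemma eq_zero_of_mulVec_eq_zero {A : Matrix (Fin n) (Fin n) ℂ}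
    (h : ∀ v, A *ᵥ v = 0) : A = 0 := by
  ext i j
  have := congrFun (h (Pi.single j 1)) i
  simpa [Matrix.mulVec_single] using this

/-- Distinct order-2 reflections cannot commute while one negates a nonzero vector of the
`-1`-line of the other. -/
lemma eq_of_commute_of_neg {s u : GL (Fin n) ℂ}
    (hs : IsReflectionGL s) (hu : IsReflectionGL u)
    (hc : (u : Matrix (Fin n) (Fin n) ℂ) * s = (s : Matrix (Fin n) (Fin n) ℂ) * u)
    {x : Fin n → ℂ} (hx0 : x ≠ 0) (hxs : x ∈ Ls s)
    (hux : (u : Matrix (Fin n) (Fin n) ℂ) *ᵥ x = -x) : s = u := by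
  have hxu : x ∈ Ls u := by
    refine mem_Ls.mpr ⟨(-(2⁻¹ : ℂ)) • x, ?_⟩
    rw [Matrix.mulVec_smul, Matrix.sub_mulVec, hux, Matrix.one_mulVec]
    module
  have hLs : Ls s = Submodule.span ℂ {x} := by
    refine (Submodule.eq_of_le_of_finrank_le ?_ ?_).symm
    · rwa [Submodule.span_le, Set.singleton_subset_iff]
    · rw [finrank_Ls hs, finrank_span_singleton hx0]
  have hLu : Ls u = Submodule.span ℂ {x} := by
    refine (Submodule.eq_of_le_of_finrank_le ?_ ?_).symm
    · rwa [Submodule.span_le, Set.singleton_subset_iff]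
    · rw [finrank_Ls hu, finrank_span_singleton hx0]
  -- Show s * u = 1.
  set S : Matrix (Fin n) (Fin n) ℂ := (s : Matrix (Fin n) (Fin n) ℂ) with hS
  set Umat : Matrix (Fin n) (Fin n) ℂ := (u : Matrix (Fin n) (Fin n) ℂ) with hU
  have hsx : S *ᵥ x = -x := acts_neg hs.1 hxs
  have ht : ∀ v, (S * Umat - 1) *ᵥ v ∈ Submodule.span ℂ {x} := by
    intro v
    have : (S * Umat - 1) *ᵥ v = S *ᵥ ((Umat - 1) *ᵥ v) + (S - 1) *ᵥ v := by
      rw [Matrix.mulVec_mulVec]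
      rw [← Matrix.add_mulVec]
      congr 1
      rw [Matrix.mul_sub, Matrix.mul_one]
      abel
    rw [this]
    refine Submodule.add_mem _ ?_ ?_
    · have h1 : (Umat - 1) *ᵥ v ∈ Submodule.span ℂ {x} := by
        rw [← hLu]; exact mem_Ls.mpr ⟨v, rfl⟩
      obtain ⟨c, hcv⟩ := Submodule.mem_span_singleton.mp h1
      rw [← hcv, Matrix.mulVec_smul, hsx]
      exact Submodule.smul_mem _ _
        (Submodule.neg_mem _ (Submodule.mem_span_singleton_self _))
    · rw [← hLs]; exact mem_Ls.mpr ⟨v, rfl⟩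
  have hzero : ∀ v ∈ Submodule.span ℂ {x}, (S * Umat - 1) *ᵥ v = 0 := by
    intro v hv
    obtain ⟨c, hcv⟩ := Submodule.mem_span_singleton.mp hv
    rw [← hcv, Matrix.mulVec_smul, Matrix.sub_mulVec, Matrix.one_mulVec,
      ← Matrix.mulVec_mulVec, hux, Matrix.mulVec_neg, hsx, neg_neg, sub_self, smul_zero]
  have hBB : ∀ v, ((S * Umat - 1) * (S * Umat - 1)) *ᵥ v = 0 := by
    intro v
    rw [← Matrix.mulVec_mulVec]
    exact hzero _ (ht v)
  have hsqm : (S * Umat) * (S * Umat) = 1 := by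
    have : S * Umat * (S * Umat) = S * (Umat * S) * Umat := by
      simp only [Matrix.mul_assoc]
    have hSS : S * S = 1 := sq_mat hs.1
    have hUU : Umat * Umat = 1 := sq_mat hu.1
    rw [this, hc]
    rw [show S * (S * Umat) * Umat = (S * S) * (Umat * Umat) by
      simp only [Matrix.mul_assoc]]
    rw [hSS, hUU, Matrix.mul_one]
  have hfix : ∀ v, (S * Umat) *ᵥ v = v := by
    intro v
    have h := hzero _ (ht v)
    have e : ∀ w, (S * Umat - 1) *ᵥ w = (S * Umat) *ᵥ w - w := fun w => by
      rw [Matrix.sub_mulVec, Matrix.one_mulVec]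
    rw [e, e, Matrix.mulVec_sub, Matrix.mulVec_mulVec, hsqm, Matrix.one_mulVec] at h
    have h4 : v - (S * Umat) *ᵥ v = (S * Umat) *ᵥ v - v := sub_eq_zero.mp h
    have h5 : (2 : ℂ) • (v - (S * Umat) *ᵥ v) = 0 := by
      rw [two_smul]
      nth_rewrite 2 [h4]
      abel
    have h6 : v - (S * Umat) *ᵥ v = 0 :=
      (smul_eq_zero.mp h5).resolve_left (by norm_num)
    exact (sub_eq_zero.mp h6).symm
  have hB0 : S * Umat - 1 = 0 := by
    apply eq_zero_of_mulVec_eq_zero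
    intro v
    rw [Matrix.sub_mulVec, Matrix.one_mulVec, hfix, sub_self]
  have hsu1 : s * u = 1 := by
    apply Units.ext
    rw [Units.val_mul, Units.val_one]
    have := sub_eq_zero.mp hB0
    exact this
  calc s = (s * u) * u⁻¹ := by rw [mul_assoc, mul_inv_cancel, mul_one]
  _ = u⁻¹ := by rw [hsu1, one_mul]
  _ = u := inv_eq_self hu.1

/-- A reflection commuting with a distinct reflection fixes its `-1`-line pointwise. -/
lemma fixes_line {s u : GL (Fin n) ℂ}
    (hs : IsReflectionGL s) (hu : IsReflectionGL u) (hne : s ≠ u)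
    (hc : (u : Matrix (Fin n) (Fin n) ℂ) * s = (s : Matrix (Fin n) (Fin n) ℂ) * u) :
    ∀ v ∈ Ls s, (u : Matrix (Fin n) (Fin n) ℂ) *ᵥ v = v := by
  obtain ⟨x, hx0, hspan⟩ := exists_gen hs
  have hxLs : x ∈ Ls s := by rw [hspan]; exact Submodule.mem_span_singleton_self _
  have hux : (u : Matrix (Fin n) (Fin n) ℂ) *ᵥ x ∈ Ls s := commute_mem_Ls hc hxLs
  rw [hspan] at hux
  obtain ⟨c, hcx⟩ := Submodule.mem_span_singleton.mp hux
  have huu : (u : Matrix (Fin n) (Fin n) ℂ) *ᵥ ((u : Matrix (Fin n) (Fin n) ℂ) *ᵥ x) = x := by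
    rw [Matrix.mulVec_mulVec, sq_mat hu.1, Matrix.one_mulVec]
  have hc2 : c * c = 1 := by
    rw [← hcx, Matrix.mulVec_smul, ← hcx, smul_smul] at huu
    by_contra hcc
    have : (c * c - 1) • x = 0 := by
      rw [sub_smul, one_smul, huu, sub_self]
    exact hcc (by
      have := (smul_eq_zero.mp this).resolve_right hx0
      linear_combination this)
  have hc1 : c = 1 := by
    rcases mul_self_eq_one_iff.mp hc2 with h | h
    · exact h
    · exfalso
      apply hne
      apply eq_of_commute_of_neg hs hu hc hx0 hxLs
      rw [← hcx, h, neg_one_smul]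
  intro v hv
  rw [hspan] at hv
  obtain ⟨d, hdv⟩ := Submodule.mem_span_singleton.mp hv
  rw [← hdv, Matrix.mulVec_smul, ← hcx, hc1, one_smul]

lemma refl_det {s : GL (Fin n) ℂ} (hs : IsReflectionGL s) :
    ((s : Matrix (Fin n) (Fin n) ℂ)).det = -1 := by
  obtain ⟨x, hx0, hspan⟩ := exists_gen hs
  set A : Matrix (Fin n) (Fin n) ℂ := (s : Matrix (Fin n) (Fin n) ℂ) - 1 with hA
  have hAne : A ≠ 0 := by
    intro h0
    have := hs.2
    rw [← hA, h0, Matrix.rank_zero] at this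
    exact zero_ne_one this
  have hcol : ∀ j, ∃ c : ℂ, A *ᵥ (Pi.single j 1) = c • x := by
    intro j
    have hmem : A *ᵥ (Pi.single j 1) ∈ Ls s := mem_Ls.mpr ⟨_, rfl⟩
    rw [hspan] at hmem
    obtain ⟨c, hc⟩ := Submodule.mem_span_singleton.mp hmem
    exact ⟨c, hc.symm⟩
  choose r hr using hcol
  have hEnt : ∀ i j, A i j = x i * r j := by
    intro i j
    have h1 := congrFun (hr j) i
    simp only [Matrix.mulVec_single_one, Matrix.col_apply, mul_one, Pi.smul_apply, smul_eq_mul] at h1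
    rw [h1, mul_comm]
  have hd : r ⬝ᵥ x = -2 := by
    have hsq : (A + 1) * (A + 1) = 1 := by
      rw [hA, sub_add_cancel]
      exact sq_mat hs.1
    have hAA : A * A = (r ⬝ᵥ x) • A := by
      ext i j
      rw [Matrix.mul_apply, Matrix.smul_apply, smul_eq_mul, dotProduct, Finset.sum_mul]
      refine Finset.sum_congr rfl fun k _ => ?_
      rw [hEnt i k, hEnt k j, hEnt i j]
      ring
    have h2 : A * A + A + A = 0 := by
      have h3 := hsq
      rw [Matrix.add_mul, Matrix.mul_add, Matrix.mul_add, Matrix.one_mul, Matrix.mul_one,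
        Matrix.mul_one] at h3
      have h4 := congrArg (· - (1 : Matrix (Fin n) (Fin n) ℂ)) h3
      simpa [add_sub_assoc, ← add_assoc] using h4
    have h5 : (r ⬝ᵥ x + 2) • A = 0 := by
      rw [add_smul, ← hAA, show (2 : ℂ) • A = A + A by rw [two_smul], ← add_assoc]
      exact h2
    have h6 : r ⬝ᵥ x + 2 = 0 := by
      rcases smul_eq_zero.mp h5 with h | h
      · exact h
      · exact absurd h hAne
    linear_combination h6
  have hcr : A = Matrix.replicateCol Unit x * Matrix.replicateRow Unit r := by
    ext i j
    rw [hEnt i j, Matrix.mul_apply]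
    simp [Matrix.replicateCol_apply, Matrix.replicateRow_apply]
  have hmat : (s : Matrix (Fin n) (Fin n) ℂ) = 1 + Matrix.replicateCol Unit x * Matrix.replicateRow Unit r := by
    rw [← hcr, hA]
    abel
  rw [hmat, Matrix.det_one_add_replicateCol_mul_replicateRow, hd]
  norm_num

lemma key (W : Subgroup (GL (Fin n) ℂ))
    (hgen : W = Subgroup.closure {s : GL (Fin n) ℂ | s ∈ W ∧ IsReflectionGL s})
    (hirr : ∀ U : Submodule ℂ (Fin n → ℂ),
      (∀ g ∈ W, ∀ v ∈ U, (g : Matrix (Fin n) (Fin n) ℂ).mulVec v ∈ U) → U = ⊥ ∨ U = ⊤) :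
    ∀ s ∈ {s : GL (Fin n) ℂ | s ∈ W ∧ IsReflectionGL s},
    ∀ u ∈ {s : GL (Fin n) ℂ | s ∈ W ∧ IsReflectionGL s},
      s * u ∈ Subgroup.closure {x : GL (Fin n) ℂ | ∃ s u : GL (Fin n) ℂ,
        (s ∈ W ∧ IsReflectionGL s) ∧ (u ∈ W ∧ IsReflectionGL u) ∧
        s * u ≠ u * s ∧ x = s * u} := by
  set R : Set (GL (Fin n) ℂ) := {s : GL (Fin n) ℂ | s ∈ W ∧ IsReflectionGL s} with hR
  set P : Set (GL (Fin n) ℂ) := {x : GL (Fin n) ℂ | ∃ s u : GL (Fin n) ℂ,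
        (s ∈ W ∧ IsReflectionGL s) ∧ (u ∈ W ∧ IsReflectionGL u) ∧
        s * u ≠ u * s ∧ x = s * u} with hP
  set N : Subgroup (GL (Fin n) ℂ) := Subgroup.closure P with hN
  by_contra hcon
  push_neg at hcon
  obtain ⟨s₀, hs₀, u₀, hu₀, hne⟩ := hcon
  -- the "component" of s₀
  set C : Set (GL (Fin n) ℂ) := {s | s ∈ R ∧ s * s₀ ∈ N} with hC
  have hC0 : s₀ ∈ C := ⟨hs₀, by rw [hs₀.2.1]; exact one_mem _⟩
  have hu₀C : u₀ ∉ C := by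
    intro h
    apply hne
    have h1 : (u₀ * s₀)⁻¹ ∈ N := inv_mem h.2
    rwa [_root_.mul_inv_rev, inv_eq_self hs₀.2.1, inv_eq_self hu₀.2.1] at h1
  set U : Submodule ℂ (Fin n → ℂ) := ⨆ s ∈ C, Ls s with hU
  -- W-invariance of U
  have QW : ∀ g ∈ W, Submodule.map
      (Matrix.mulVecLin ((g : Matrix (Fin n) (Fin n) ℂ))) U = U := by
    intro g hg
    rw [hgen] at hg
    refine Subgroup.closure_induction
      (p := fun (w : GL (Fin n) ℂ) (_ : w ∈ Subgroup.closure R) => Submodule.map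
        (Matrix.mulVecLin ((w : Matrix (Fin n) (Fin n) ℂ))) U = U) ?_ ?_ ?_ ?_ hg
    · intro t ht
      have htt : (t : Matrix (Fin n) (Fin n) ℂ) * t = 1 := sq_mat ht.2.1
      have hmaple : Submodule.map
          (Matrix.mulVecLin ((t : Matrix (Fin n) (Fin n) ℂ))) U ≤ U := by
        rw [hU, Submodule.map_iSup]
        refine iSup_le fun s => ?_
        rw [Submodule.map_iSup]
        refine iSup_le fun hsC => ?_
        by_cases hcomm : (t : Matrix (Fin n) (Fin n) ℂ) * s = (s : Matrix (Fin n) (Fin n) ℂ) * t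
        · -- commuting: t preserves Ls s
          have hle1 : Submodule.map (Matrix.mulVecLin ((t : Matrix (Fin n) (Fin n) ℂ)))
              (Ls s) ≤ Ls s := by
            rintro v ⟨w, hw, rfl⟩
            rw [Matrix.mulVecLin_apply]
            exact commute_mem_Ls hcomm hw
          exact hle1.trans (le_iSup₂ (f := fun s (_ : s ∈ C) => Ls s) s hsC)
        · -- non-commuting: t maps Ls s into Ls (t*s*t), which belongs to C
          have hsR : s ∈ R := hsC.1
          have hstP : t * s ∈ P := ⟨t, s, ht, hsR, by
            intro h
            apply hcomm
            have := congrArg (Units.val) h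
            rwa [Units.val_mul, Units.val_mul] at this, rfl⟩
          have hss : s * s = 1 := hsR.2.1
          have hTT : t * t = 1 := ht.2.1
          have hcsq : (t * s * t) * (t * s * t) = 1 := by
            calc (t * s * t) * (t * s * t) = t * (s * ((t * t) * (s * t))) := by group
            _ = 1 := by rw [hTT, one_mul, ← mul_assoc s s t, hss, one_mul, hTT]
          have hdetT : IsUnit ((t : Matrix (Fin n) (Fin n) ℂ)).det :=
            IsUnit.of_mul_eq_one _ (by rw [← Matrix.det_mul, htt, Matrix.det_one])
          have hcmat : ((t * s * t : GL (Fin n) ℂ) : Matrix (Fin n) (Fin n) ℂ)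
              = (t : Matrix (Fin n) (Fin n) ℂ) * s * t := by
            rw [Units.val_mul, Units.val_mul]
          have hcrank : IsReflectionGL (t * s * t) := by
            refine ⟨hcsq, ?_⟩
            have hfact : ((t * s * t : GL (Fin n) ℂ) : Matrix (Fin n) (Fin n) ℂ) - 1
                = (t : Matrix (Fin n) (Fin n) ℂ) *
                  (((s : Matrix (Fin n) (Fin n) ℂ) - 1) * t) := by
              rw [hcmat, Matrix.sub_mul, Matrix.one_mul, Matrix.mul_sub, htt,
                Matrix.mul_assoc]
            rw [hfact, Matrix.rank_mul_eq_right_of_isUnit_det _ _ hdetT,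
              Matrix.rank_mul_eq_left_of_isUnit_det _ _ hdetT]
            exact hsR.2.2
          have hcC : t * s * t ∈ C := by
            refine ⟨⟨mul_mem (mul_mem ht.1 hsR.1) ht.1, hcrank⟩, ?_⟩
            have hmem : (t * s) * ((t * s) * (s * s₀)) ∈ N :=
              mul_mem (Subgroup.subset_closure hstP)
                (mul_mem (Subgroup.subset_closure hstP) hsC.2)
            have heq : (t * s) * ((t * s) * (s * s₀)) = (t * s * t) * s₀ := by
              calc (t * s) * ((t * s) * (s * s₀)) = (t * s) * (t * ((s * s) * s₀)) := by group
              _ = (t * s * t) * s₀ := by rw [hss, one_mul]; group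
            rwa [heq] at hmem
          have hle1 : Submodule.map (Matrix.mulVecLin ((t : Matrix (Fin n) (Fin n) ℂ)))
              (Ls s) ≤ Ls (t * s * t) := by
            rintro v ⟨w, hw, rfl⟩
            obtain ⟨z, hz⟩ := mem_Ls.mp hw
            rw [Matrix.mulVecLin_apply, ← hz]
            refine mem_Ls.mpr ⟨(t : Matrix (Fin n) (Fin n) ℂ) *ᵥ z, ?_⟩
            rw [Matrix.mulVec_mulVec, Matrix.mulVec_mulVec]
            congr 1
            rw [hcmat, Matrix.sub_mul, Matrix.one_mul, Matrix.mul_sub,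
              Matrix.mul_assoc ((t : Matrix (Fin n) (Fin n) ℂ) * (s : Matrix (Fin n) (Fin n) ℂ))
                ((t : Matrix (Fin n) (Fin n) ℂ)) ((t : Matrix (Fin n) (Fin n) ℂ)), htt,
              Matrix.mul_one, Matrix.mul_one]
          exact hle1.trans (le_iSup₂ (f := fun s (_ : s ∈ C) => Ls s) (t * s * t) hcC)
      refine le_antisymm hmaple ?_
      calc U = Submodule.map (Matrix.mulVecLin
          ((t : Matrix (Fin n) (Fin n) ℂ) * (t : Matrix (Fin n) (Fin n) ℂ))) U := by
            rw [htt, Matrix.mulVecLin_one, Submodule.map_id]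
      _ = Submodule.map (Matrix.mulVecLin ((t : Matrix (Fin n) (Fin n) ℂ)))
          (Submodule.map (Matrix.mulVecLin ((t : Matrix (Fin n) (Fin n) ℂ))) U) := by
            rw [Matrix.mulVecLin_mul, Submodule.map_comp]
      _ ≤ Submodule.map (Matrix.mulVecLin ((t : Matrix (Fin n) (Fin n) ℂ))) U :=
            Submodule.map_mono hmaple
    · simp only [Units.val_one, Matrix.mulVecLin_one, Submodule.map_id]
    · intro x y _ _ hx hy
      rw [Units.val_mul, Matrix.mulVecLin_mul, Submodule.map_comp, hy, hx]
    · intro x _ hx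
      calc Submodule.map (Matrix.mulVecLin ((x⁻¹ : GL (Fin n) ℂ) : Matrix (Fin n) (Fin n) ℂ)) U
          = Submodule.map (Matrix.mulVecLin ((x⁻¹ : GL (Fin n) ℂ) : Matrix (Fin n) (Fin n) ℂ))
            (Submodule.map (Matrix.mulVecLin ((x : Matrix (Fin n) (Fin n) ℂ))) U) := by
            rw [hx]
      _ = Submodule.map (Matrix.mulVecLin
            (((x⁻¹ : GL (Fin n) ℂ) : Matrix (Fin n) (Fin n) ℂ)
              * ((x : GL (Fin n) ℂ) : Matrix (Fin n) (Fin n) ℂ))) U := by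
            rw [Matrix.mulVecLin_mul, Submodule.map_comp]
      _ = U := by
            rw [← Units.val_mul, inv_mul_cancel, Units.val_one, Matrix.mulVecLin_one,
              Submodule.map_id]
  have hinv : ∀ g ∈ W, ∀ v ∈ U, (g : Matrix (Fin n) (Fin n) ℂ).mulVec v ∈ U := by
    intro g hg v hv
    have h1 := QW g hg
    rw [← h1]
    exact Submodule.mem_map.mpr ⟨v, hv, by rw [Matrix.mulVecLin_apply]⟩
  have hUtop : U = ⊤ := by
    rcases hirr U hinv with h | h
    · exfalso
      have h1 : Ls s₀ ≤ U := le_iSup₂ (f := fun s (_ : s ∈ C) => Ls s) s₀ hC0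
      rw [h] at h1
      exact Ls_ne_bot hs₀.2 (le_bot_iff.mp h1)
    · exact h
  -- u₀ fixes U = ⊤ pointwise, contradiction
  set F : Submodule ℂ (Fin n → ℂ) :=
    LinearMap.ker (Matrix.mulVecLin ((u₀ : Matrix (Fin n) (Fin n) ℂ)) - LinearMap.id) with hF
  have hUF : U ≤ F := by
    rw [hU]
    refine iSup_le fun s => iSup_le fun hsC => ?_
    intro v hv
    have hcomm : (u₀ : Matrix (Fin n) (Fin n) ℂ) * s = (s : Matrix (Fin n) (Fin n) ℂ) * u₀ := by
      by_contra hnc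
      apply hu₀C
      have hP1 : u₀ * s ∈ P := ⟨u₀, s, hu₀, hsC.1, by
        intro h
        apply hnc
        have := congrArg (Units.val) h
        rwa [Units.val_mul, Units.val_mul] at this, rfl⟩
      refine ⟨hu₀, ?_⟩
      have hmem : (u₀ * s) * (s * s₀) ∈ N :=
        mul_mem (Subgroup.subset_closure hP1) hsC.2
      have heq : (u₀ * s) * (s * s₀) = u₀ * s₀ := by
        calc (u₀ * s) * (s * s₀) = u₀ * ((s * s) * s₀) := by group
        _ = u₀ * s₀ := by rw [hsC.1.2.1, one_mul]
      rwa [heq] at hmem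
    have hneq : s ≠ u₀ := fun h => hu₀C (h ▸ hsC)
    have hfix := fixes_line hsC.1.2 hu₀.2 hneq hcomm v hv
    rw [hF, LinearMap.mem_ker, LinearMap.sub_apply, LinearMap.id_apply,
      Matrix.mulVecLin_apply, hfix, sub_self]
  have hFtop : ∀ v, (u₀ : Matrix (Fin n) (Fin n) ℂ) *ᵥ v = v := by
    intro v
    have hv : v ∈ F := hUF (hUtop ▸ Submodule.mem_top)
    rw [hF, LinearMap.mem_ker, LinearMap.sub_apply, LinearMap.id_apply,
      Matrix.mulVecLin_apply, sub_eq_zero] at hv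
    exact hv
  have hzero : (u₀ : Matrix (Fin n) (Fin n) ℂ) - 1 = 0 := by
    apply eq_zero_of_mulVec_eq_zero
    intro v
    rw [Matrix.sub_mulVec, Matrix.one_mulVec, hFtop, sub_self]
  have := hu₀.2.2
  rw [hzero, Matrix.rank_zero] at this
  exact zero_ne_one this


end Stmt10Aux

/-- For an irreducible complex reflection group `W` all of whose reflections have order 2,
the rotation subgroup `O = ker(det)` is generated by the products `s u` of non-commuting
reflections. -/
theorem stmt10 {n : ℕ} (W : Subgroup (GL (Fin n) ℂ)) [Finite W]
    (hgen : W = Subgroup.closure {s : GL (Fin n) ℂ | s ∈ W ∧ IsReflectionGL s})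
    (hirr : ∀ U : Submodule ℂ (Fin n → ℂ),
      (∀ g ∈ W, ∀ v ∈ U, (g : Matrix (Fin n) (Fin n) ℂ).mulVec v ∈ U) → U = ⊥ ∨ U = ⊤) :
    ∀ g ∈ W, ((g : Matrix (Fin n) (Fin n) ℂ).det = 1 ↔
      g ∈ Subgroup.closure {x : GL (Fin n) ℂ | ∃ s u : GL (Fin n) ℂ,
        (s ∈ W ∧ IsReflectionGL s) ∧ (u ∈ W ∧ IsReflectionGL u) ∧
        s * u ≠ u * s ∧ x = s * u}) := by
  intro g hgW
  set R : Set (GL (Fin n) ℂ) := {s : GL (Fin n) ℂ | s ∈ W ∧ IsReflectionGL s} with hRdef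
  set P : Set (GL (Fin n) ℂ) := {x : GL (Fin n) ℂ | ∃ s u : GL (Fin n) ℂ,
        (s ∈ W ∧ IsReflectionGL s) ∧ (u ∈ W ∧ IsReflectionGL u) ∧
        s * u ≠ u * s ∧ x = s * u} with hPdef
  constructor
  · intro hdet
    have hkey := Stmt10Aux.key W hgen hirr
    have hgW' : g ∈ Subgroup.closure R := by rw [← hgen]; exact hgW
    have hgm : g ∈ Submonoid.closure (R ∪ R⁻¹) := by
      rw [← Subgroup.closure_toSubmonoid]
      exact hgW'
    obtain ⟨l, hl, hlp⟩ := Submonoid.exists_list_of_mem_closure hgm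
    have hlR : ∀ x ∈ l, x ∈ R := by
      intro x hx
      rcases hl x hx with h | h
      · exact h
      · rw [Set.mem_inv] at h
        have hx2 : x = x⁻¹ := (inv_inv x).symm.trans (Stmt10Aux.inv_eq_self h.2.1)
        rw [hx2]
        exact h
    have hpow : ((-1 : ℂ)) ^ l.length = 1 := by
      have h1 : ((g : Matrix (Fin n) (Fin n) ℂ)).det
          = (l.map (fun x : GL (Fin n) ℂ =>
              ((x : Matrix (Fin n) (Fin n) ℂ)).det)).prod := by
        rw [← hlp]
        exact map_list_prod
          ((Matrix.detMonoidHom).comp (Units.coeHom (Matrix (Fin n) (Fin n) ℂ))) l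
      have h2 : (l.map (fun x : GL (Fin n) ℂ =>
          ((x : Matrix (Fin n) (Fin n) ℂ)).det)).prod
          = (-1 : ℂ) ^ (l.map (fun x : GL (Fin n) ℂ =>
              ((x : Matrix (Fin n) (Fin n) ℂ)).det)).length := by
        apply List.prod_eq_pow_card
        intro y hy
        obtain ⟨x, hx, rfl⟩ := List.mem_map.mp hy
        exact Stmt10Aux.refl_det (hlR x hx).2
      rw [h1, h2, List.length_map] at hdet
      exact hdet
    have heven : Even l.length := by
      rw [neg_one_pow_eq_one_iff_even (by norm_num : (-1 : ℂ) ≠ 1)] at hpow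
      exact hpow
    rw [← hlp]
    have main : ∀ k (l : List (GL (Fin n) ℂ)), l.length ≤ k → (∀ x ∈ l, x ∈ R) →
        Even l.length → l.prod ∈ Subgroup.closure P := by
      intro k
      induction k with
      | zero =>
        intro l hk _ _
        have : l = [] := List.eq_nil_of_length_eq_zero (Nat.le_zero.mp hk)
        rw [this, List.prod_nil]
        exact one_mem _
      | succ k ih =>
        intro l hk hmem hev
        rcases l with _ | ⟨a, _ | ⟨b, rest⟩⟩
        · rw [List.prod_nil]; exact one_mem _
        · exfalso
          simp only [List.length_singleton] at hev
          exact (Nat.not_even_iff_odd.mpr odd_one) hev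
        · have h1 : a * b ∈ Subgroup.closure P :=
            hkey a (hmem a (by simp)) b (hmem b (by simp))
          have h2 : rest.prod ∈ Subgroup.closure P := by
            refine ih rest ?_ (fun x hx => hmem x (by simp [hx])) ?_
            · simp only [List.length_cons] at hk
              omega
            · simp only [List.length_cons] at hev
              rw [Nat.even_add_one, Nat.even_add_one, not_not] at hev
              exact hev
          rw [List.prod_cons, List.prod_cons, ← mul_assoc]
          exact mul_mem h1 h2
    exact main l.length l le_rfl hlR heven
  · intro hmem
    refine Subgroup.closure_induction
      (p := fun (x : GL (Fin n) ℂ) (_ : x ∈ Subgroup.closure P) =>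
        ((x : Matrix (Fin n) (Fin n) ℂ)).det = 1) ?_ ?_ ?_ ?_ hmem
    · rintro x ⟨s, u, hs, hu, hnc, rfl⟩
      rw [Units.val_mul, Matrix.det_mul, Stmt10Aux.refl_det hs.2, Stmt10Aux.refl_det hu.2]
      norm_num
    · simp only [Units.val_one, Matrix.det_one]
    · intro x y _ _ hx hy
      rw [Units.val_mul, Matrix.det_mul, hx, hy, one_mul]
    · intro x _ hx
      have h1 : (((x⁻¹ : GL (Fin n) ℂ) : Matrix (Fin n) (Fin n) ℂ)
          * ((x : GL (Fin n) ℂ) : Matrix (Fin n) (Fin n) ℂ)).det = 1 := by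
        rw [← Units.val_mul, inv_mul_cancel]
        simp only [Units.val_one, Matrix.det_one]
      rw [Matrix.det_mul, hx, mul_one] at h1
      exact h1
end
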